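/- arXiv:2111.13195 — 13 statements merged into one kernel-verified Lean document; each statement's English description precedes it below -/
import Mathlib

section
/- Let n ≥ 1 and let ∂ be the unique ℤ-linear derivation on the polynomial ring ℤ[x_1,…,x_n] with ∂(x_i) = x_i² for all i. Let Δ = ∏_{1 ≤ i < j ≤ n} (x_j − x_i) be the Vandermonde determinant. Then ∂(Δ) = (n−1)·e_1·Δ, where e_1 = x_1 + ⋯ + x_n is the first elementary symmetric polynomial. -/
/-!
Each factor of the Vandermonde product has a linear logarithmic derivative:
`∂(x_j - x_i) = x_j² - x_i² = (x_i + x_j)(x_j - x_i)`. Logarithmic derivatives add over products,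
so `∂Δ = (∑_{i<j} (x_i + x_j)) Δ`, and every `x_k` occurs in exactly `n - 1` of these pairs.
-/

open MvPolynomial Finset

theorem Derivation.map_prod_of_map_eq_mul {R A ι : Type*} [CommSemiring R] [CommSemiring A]
    [Algebra R A] (D : Derivation R A A) {s : Finset ι} {f g : ι → A}
    (h : ∀ i ∈ s, D (f i) = g i * f i) :
    D (∏ i ∈ s, f i) = (∑ i ∈ s, g i) * ∏ i ∈ s, f i := by
  classical
  induction s using Finset.induction_on with
  | empty => simp
  | insert a s ha ih =>
    rw [prod_insert ha, sum_insert ha, D.leibniz, smul_eq_mul, smul_eq_mul,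
      ih fun i hi => h i (mem_insert_of_mem hi), h a (mem_insert_self a s)]
    ring

theorem Finset.sum_filter_lt_add_eq_nsmul {ι M : Type*} [Fintype ι] [LinearOrder ι]
    [AddCommMonoid M] (f : ι → M) :
    ∑ p ∈ univ.filter (fun p : ι × ι => p.1 < p.2), (f p.1 + f p.2) =
      (Fintype.card ι - 1) • ∑ i, f i := by
  have hswap : ∑ p ∈ univ.filter (fun p : ι × ι => p.1 < p.2), f p.2 =
      ∑ p ∈ univ.filter (fun p : ι × ι => p.2 < p.1), f p.1 :=
    sum_nbij' Prod.swap Prod.swap (by simp) (by simp) (by simp) (by simp) (by simp)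
  have hrow : ∀ i : ι, ∑ j, (if i < j then f i else 0) + ∑ j, (if j < i then f i else 0) =
      (Fintype.card ι - 1) • f i := by
    intro i
    have hne : ∀ j, ((if i < j then f i else 0) + if j < i then f i else 0) =
        if i ≠ j then f i else 0 := by
      intro j
      rcases lt_trichotomy i j with hij | rfl | hji
      · simp [hij, hij.ne, hij.not_gt]
      · simp
      · simp [hji, hji.ne', hji.not_gt]
    rw [← sum_add_distrib, sum_congr rfl fun j _ => hne j, ← sum_filter, filter_ne,
      sum_const, card_erase_of_mem (mem_univ i), card_univ]
  rw [sum_add_distrib, hswap, sum_filter, sum_filter, Fintype.sum_prod_type,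
    Fintype.sum_prod_type, ← sum_add_distrib, smul_sum]
  exact sum_congr rfl fun i _ => hrow i

/-- For `n ≥ 1`, the derivation `∂` on `ℤ[x_1,…,x_n]` with `∂(x_i) = x_i²`
satisfies `∂(Δ) = (n-1)·e₁·Δ`, where `Δ` is the Vandermonde determinant and
`e₁ = x_1 + ⋯ + x_n`. -/
theorem vandermonde_derivation (n : ℕ) (hn : 1 ≤ n)
    (D : Derivation ℤ (MvPolynomial (Fin n) ℤ) (MvPolynomial (Fin n) ℤ))
    (hD : ∀ i, D (X i) = X i ^ 2) :
    D (∏ p ∈ Finset.univ.filter (fun p : Fin n × Fin n => p.1 < p.2), (X p.2 - X p.1)) =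
      C ((n : ℤ) - 1) * ((∑ i, X i) *
        ∏ p ∈ Finset.univ.filter (fun p : Fin n × Fin n => p.1 < p.2), (X p.2 - X p.1)) := by
  have hfactor : ∀ p ∈ univ.filter (fun p : Fin n × Fin n => p.1 < p.2),
      D (X p.2 - X p.1) = (X p.1 + X p.2) * (X p.2 - X p.1) := by
    intro p _
    rw [map_sub, hD, hD]
    ring
  rw [D.map_prod_of_map_eq_mul hfactor, sum_filter_lt_add_eq_nsmul, Fintype.card_fin,
    ← Nat.cast_smul_eq_nsmul ℤ, Nat.cast_sub hn, Nat.cast_one, smul_eq_C_mul, mul_assoc]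
end

section
/- Let n ≥ 1, let 1 ≤ k ≤ n, and let ∂ be the unique ℤ-linear derivation on ℤ[x_1,…,x_n] with ∂(x_i) = x_i² for all i. Let ∇ = ∏_{i=1}^{k} ∏_{j=k+1}^{n} (x_j − x_i). Then ∂(∇) = ( (n−k)·(x_1 + ⋯ + x_k) + k·(x_{k+1} + ⋯ + x_n) )·∇. -/
/-! Each factor `x_j - x_i` of `∇` is a logarithmic eigenvector of `∂`:
`∂(x_j - x_i) = x_j² - x_i² = (x_j + x_i)(x_j - x_i)`. By the Leibniz rule `∂∇ / ∇` is then the sum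
of `x_j + x_i` over the `k (n - k)` pairs, in which each `x_i` with `i < k` occurs `n - k` times and
each `x_j` with `k ≤ j` occurs `k` times. -/

open MvPolynomial Finset

namespace Derivation

variable {R A : Type*} [CommSemiring R] [CommSemiring A] [Algebra R A] (D : Derivation R A A)

theorem map_prod_of_map_eq_mul_s1 {ι : Type*} (s : Finset ι) (f g : ι → A)
    (h : ∀ i ∈ s, D (f i) = g i * f i) :
    D (∏ i ∈ s, f i) = (∑ i ∈ s, g i) * ∏ i ∈ s, f i := by
  induction s using Finset.cons_induction with
  | empty => simp
  | cons a s ha ih =>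
    rw [prod_cons, sum_cons, leibniz, ih fun i hi ↦ h i (mem_cons_of_mem hi),
      h a (mem_cons_self a s), smul_eq_mul, smul_eq_mul]
    ring

theorem map_sub_of_map_eq_sq {R A : Type*} [CommRing R] [CommRing A] [Algebra R A]
    (D : Derivation R A A) {a b : A} (ha : D a = a ^ 2) (hb : D b = b ^ 2) :
    D (b - a) = (b + a) * (b - a) := by
  rw [map_sub, ha, hb]
  ring

end Derivation

theorem Fin.card_filter_val_lt_of_le {n k : ℕ} (hk : k ≤ n) : #{i : Fin n | (i : ℕ) < k} = k := by
  rw [Fin.card_filter_val_lt, min_eq_right hk]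

theorem Fin.card_filter_le_val {n k : ℕ} (hk : k ≤ n) : #{j : Fin n | k ≤ (j : ℕ)} = n - k := by
  simp only [← not_lt]
  rw [filter_not, card_sdiff_of_subset (filter_subset _ _), card_univ, Fintype.card_fin,
    Fin.card_filter_val_lt_of_le hk]

theorem nabla_derivation_general (n k : ℕ) (hk2 : k ≤ n)
    (D : Derivation ℤ (MvPolynomial (Fin n) ℤ) (MvPolynomial (Fin n) ℤ))
    (hD : ∀ i, D (X i) = X i ^ 2) :
    D (∏ i ∈ Finset.univ.filter (fun i : Fin n => (i : ℕ) < k),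
        ∏ j ∈ Finset.univ.filter (fun j : Fin n => k ≤ (j : ℕ)), (X j - X i)) =
      ((n - k) • (∑ i ∈ Finset.univ.filter (fun i : Fin n => (i : ℕ) < k), X i) +
          k • (∑ j ∈ Finset.univ.filter (fun j : Fin n => k ≤ (j : ℕ)), X j)) *
        ∏ i ∈ Finset.univ.filter (fun i : Fin n => (i : ℕ) < k),
          ∏ j ∈ Finset.univ.filter (fun j : Fin n => k ≤ (j : ℕ)), (X j - X i) := by
  have hfactor : ∀ p ∈ univ.filter (fun i : Fin n => (i : ℕ) < k) ×ˢ
      univ.filter (fun j : Fin n => k ≤ (j : ℕ)),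
      D (X p.2 - X p.1) = (X p.2 + X p.1) * (X p.2 - X p.1) :=
    fun p _ ↦ D.map_sub_of_map_eq_sq (hD p.1) (hD p.2)
  rw [← prod_product', D.map_prod_of_map_eq_mul_s1 _ _ _ hfactor, sum_product]
  simp only [sum_add_distrib, sum_const, ← smul_sum, Fin.card_filter_val_lt_of_le hk2,
    Fin.card_filter_le_val hk2]
  rw [add_comm]

/-- For `1 ≤ k ≤ n`, the derivation `∂` on `ℤ[x_1,…,x_n]` with `∂(x_i) = x_i²`
satisfies `∂(∇) = ((n-k)·(x_1+⋯+x_k) + k·(x_{k+1}+⋯+x_n))·∇`, where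
`∇ = ∏_{i ≤ k < j} (x_j - x_i)`. -/
theorem nabla_derivation (n k : ℕ) (hn : 1 ≤ n) (hk1 : 1 ≤ k) (hk2 : k ≤ n)
    (D : Derivation ℤ (MvPolynomial (Fin n) ℤ) (MvPolynomial (Fin n) ℤ))
    (hD : ∀ i, D (X i) = X i ^ 2) :
    D (∏ i ∈ Finset.univ.filter (fun i : Fin n => (i : ℕ) < k),
        ∏ j ∈ Finset.univ.filter (fun j : Fin n => k ≤ (j : ℕ)), (X j - X i)) =
      ((n - k) • (∑ i ∈ Finset.univ.filter (fun i : Fin n => (i : ℕ) < k), X i) +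
          k • (∑ j ∈ Finset.univ.filter (fun j : Fin n => k ≤ (j : ℕ)), X j)) *
        ∏ i ∈ Finset.univ.filter (fun i : Fin n => (i : ℕ) < k),
          ∏ j ∈ Finset.univ.filter (fun j : Fin n => k ≤ (j : ℕ)), (X j - X i) :=
  nabla_derivation_general n k hk2 D hD
end

section
/- Let ∂ be the unique ℤ-linear derivation on ℤ[x_1,…,x_n] with ∂(x_i) = x_i² for all i, and let e_j denote the j-th elementary symmetric polynomial in x_1,…,x_n (so e_j = 0 for j > n). Then for every i ≥ 1, ∂(e_i) = e_1·e_i − (i+1)·e_{i+1}. -/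
open MvPolynomial Finset

lemma D_prod_X (n : ℕ)
    (D : Derivation ℤ (MvPolynomial (Fin n) ℤ) (MvPolynomial (Fin n) ℤ))
    (hD : ∀ i, D (X i) = X i ^ 2) (s : Finset (Fin n)) :
    D (∏ j ∈ s, X j) = (∑ j ∈ s, X j) * ∏ j ∈ s, X j := by
  induction s using Finset.cons_induction with
  | empty => simp
  | cons a s ha ih =>
    rw [Finset.prod_cons, D.leibniz, smul_eq_mul, smul_eq_mul, ih, hD, Finset.sum_cons]
    ring

lemma key_sum (n i : ℕ) :
    ∑ s ∈ powersetCard i (univ : Finset (Fin n)), ∑ j ∈ sᶜ, X j * ∏ k ∈ s, (X k : MvPolynomial (Fin n) ℤ)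
      = ∑ t ∈ powersetCard (i+1) (univ : Finset (Fin n)), ∑ _j ∈ t, ∏ k ∈ t, X k := by
  rw [Finset.sum_sigma', Finset.sum_sigma']
  refine Finset.sum_nbij' (fun p => ⟨insert p.2 p.1, p.2⟩) (fun p => ⟨p.1.erase p.2, p.2⟩)
    ?_ ?_ ?_ ?_ ?_
  · rintro ⟨s, j⟩ hp
    simp only [Finset.mem_sigma, mem_powersetCard_univ, Finset.mem_compl] at hp ⊢
    exact ⟨by rw [Finset.card_insert_of_notMem hp.2, hp.1], Finset.mem_insert_self _ _⟩
  · rintro ⟨t, j⟩ hp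
    simp only [Finset.mem_sigma, mem_powersetCard_univ, Finset.mem_compl] at hp ⊢
    exact ⟨by rw [Finset.card_erase_of_mem hp.2, hp.1]; rfl, Finset.notMem_erase _ _⟩
  · rintro ⟨s, j⟩ hp
    simp only [Finset.mem_sigma, mem_powersetCard_univ, Finset.mem_compl] at hp
    simp [Finset.erase_insert hp.2]
  · rintro ⟨t, j⟩ hp
    simp only [Finset.mem_sigma, mem_powersetCard_univ, Finset.mem_compl] at hp
    simp [Finset.insert_erase hp.2]
  · rintro ⟨s, j⟩ hp
    simp only [Finset.mem_sigma, mem_powersetCard_univ, Finset.mem_compl] at hp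
    exact (Finset.prod_insert hp.2).symm

/-- For the derivation `∂` on `ℤ[x_1,…,x_n]` with `∂(x_i) = x_i²` and the
elementary symmetric polynomials `e_j`, one has `∂(e_i) = e₁·e_i - (i+1)·e_{i+1}` for `i ≥ 1`. -/
theorem derivation_esymm (n : ℕ)
    (D : Derivation ℤ (MvPolynomial (Fin n) ℤ) (MvPolynomial (Fin n) ℤ))
    (hD : ∀ i, D (X i) = X i ^ 2) :
    ∀ i : ℕ, 1 ≤ i →
      D (esymm (Fin n) ℤ i) =
        esymm (Fin n) ℤ 1 * esymm (Fin n) ℤ i - (i + 1) • esymm (Fin n) ℤ (i + 1) := by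
  intro i _
  have he : ∀ k, esymm (Fin n) ℤ k = ∑ t ∈ powersetCard k (univ : Finset (Fin n)), ∏ j ∈ t, X j :=
    fun k => rfl
  have h1 : esymm (Fin n) ℤ 1 = ∑ j, X j := esymm_one _ _
  rw [eq_sub_iff_add_eq, he i, map_sum, h1, Finset.mul_sum]
  have hsmul : (i + 1) • esymm (Fin n) ℤ (i+1)
      = ∑ t ∈ powersetCard (i+1) (univ : Finset (Fin n)), ∑ _j ∈ t, ∏ k ∈ t, X k := by
    rw [he, Finset.smul_sum]
    refine Finset.sum_congr rfl fun t ht => ?_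
    rw [Finset.sum_const, mem_powersetCard_univ.mp ht]
  rw [hsmul, ← key_sum n i]
  rw [← Finset.sum_add_distrib]
  apply Finset.sum_congr rfl
  intro s hs
  rw [D_prod_X n D hD, Finset.sum_mul, Finset.sum_mul]
  exact Finset.sum_add_sum_compl s _
end

section
/- Let ∂ be the unique ℤ-linear derivation on ℤ[x_1,…,x_n] with ∂(x_i) = x_i² for all i, and let h_j denote the j-th complete homogeneous symmetric polynomial in x_1,…,x_n. Then for every i ≥ 1, ∂(h_i) = (i+1)·h_{i+1} − h_1·h_i. -/
/-!
Since `∂ x_a = x_a²`, the Leibniz rule gives `∂(x^s) = (∑_{a ∈ s} x_a) · x^s` for every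
monomial `x^s`, so `∂(x^s) + h₁ · x^s = ∑_a (mult_a(s) + 1) · x_a x^s`. Summing over the
monomials of degree `i`, a monomial `x^t` of degree `i + 1` is reached from `x^{t - a}` for
each `a ∈ t`, with total weight `∑_a mult_a(t) = i + 1`. Hence `∂ h_i + h₁ h_i = (i + 1) h_{i+1}`.
-/

open MvPolynomial Finset

theorem Derivation.map_multiset_prod_of_map_eq_sq {R A ι : Type*} [CommSemiring R]
    [CommSemiring A] [Algebra R A] (D : Derivation R A A) {f : ι → A} (hf : ∀ a, D (f a) = f a ^ 2)
    (s : Multiset ι) : D (s.map f).prod = (s.map f).sum * (s.map f).prod := by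
  induction s using Multiset.induction_on with
  | empty => simp
  | cons a s ih =>
    simp only [Multiset.map_cons, Multiset.prod_cons, Multiset.sum_cons, Derivation.leibniz, ih, hf,
      smul_eq_mul]
    ring

theorem Multiset.sum_map_eq_sum_count_nsmul {ι M : Type*} [Fintype ι] [DecidableEq ι]
    [AddCommMonoid M] (s : Multiset ι) (f : ι → M) :
    (s.map f).sum = ∑ a, s.count a • f a := by
  rw [Finset.sum_multiset_map_count]
  exact sum_subset (subset_univ _) fun a _ ha => by
    rw [Multiset.count_eq_zero_of_notMem (by simpa using ha), zero_smul]

theorem Sym.sum_cons_count_nsmul {α M : Type*} [Fintype α] [DecidableEq α] [AddCommMonoid M]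
    {k : ℕ} (a : α) (f : Sym α (k + 1) → M) :
    ∑ s : Sym α k, (a ::ₛ s).1.count a • f (a ::ₛ s) =
      ∑ t : Sym α (k + 1), t.1.count a • f t := by
  refine sum_of_injOn (a ::ₛ ·) (fun s _ s' _ h => (Sym.cons_inj_right a s s').1 h)
    (fun _ _ => Finset.mem_coe.2 (mem_univ _)) (fun t _ ht => ?_) (fun _ _ => rfl)
  have hat : a ∉ t := fun hat =>
    ht ⟨t.erase a hat, Finset.mem_coe.2 (mem_univ _), Sym.cons_erase hat⟩
  rw [Multiset.count_eq_zero_of_notMem hat, zero_smul]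

theorem derivation_hsymm_add_hsymm_one_mul {σ R : Type*} [Fintype σ] [DecidableEq σ]
    [CommSemiring R] (D : Derivation R (MvPolynomial σ R) (MvPolynomial σ R))
    (hD : ∀ a, D (X a) = X a ^ 2) (k : ℕ) :
    D (hsymm σ R k) + hsymm σ R 1 * hsymm σ R k = (k + 1) • hsymm σ R (k + 1) := by
  have hcons (s : Sym σ k) : D (s.1.map X).prod + hsymm σ R 1 * (s.1.map X).prod =
      ∑ a, (a ::ₛ s).1.count a • ((a ::ₛ s).1.map X).prod := by
    simp only [D.map_multiset_prod_of_map_eq_sq hD, hsymm_one, Multiset.sum_map_eq_sum_count_nsmul,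
      ← sum_add_distrib, sum_mul, Sym.val_eq_coe, Sym.coe_cons, Multiset.count_cons_self,
      Multiset.map_cons, Multiset.prod_cons, add_smul, one_smul, smul_mul_assoc]
  calc D (hsymm σ R k) + hsymm σ R 1 * hsymm σ R k
      = ∑ s : Sym σ k, ∑ a, (a ::ₛ s).1.count a • ((a ::ₛ s).1.map X).prod := by
        rw [hsymm, map_sum, mul_sum, ← sum_add_distrib]
        exact sum_congr rfl fun s _ => hcons s
    _ = ∑ a, ∑ t : Sym σ (k + 1), t.1.count a • (t.1.map X).prod := by
        rw [sum_comm]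
        exact sum_congr rfl fun a _ => Sym.sum_cons_count_nsmul a fun t => (t.1.map X).prod
    _ = (k + 1) • hsymm σ R (k + 1) := by
        rw [sum_comm, hsymm, smul_sum]
        refine sum_congr rfl fun t _ => ?_
        rw [← sum_smul, Multiset.sum_count_eq_card fun _ _ => mem_univ _, t.2]

/-- For the derivation `∂` on `ℤ[x_1,…,x_n]` with `∂(x_i) = x_i²` and the
complete homogeneous symmetric polynomials `h_j`, one has `∂(h_i) = (i+1)·h_{i+1} - h₁·h_i`
for `i ≥ 1`. -/
theorem derivation_hsymm (n : ℕ)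
    (D : Derivation ℤ (MvPolynomial (Fin n) ℤ) (MvPolynomial (Fin n) ℤ))
    (hD : ∀ i, D (X i) = X i ^ 2) :
    ∀ i : ℕ, 1 ≤ i →
      D (hsymm (Fin n) ℤ i) =
        (i + 1) • hsymm (Fin n) ℤ (i + 1) - hsymm (Fin n) ℤ 1 * hsymm (Fin n) ℤ i := fun i _ =>
  eq_sub_of_add_eq (derivation_hsymm_add_hsymm_one_mul D hD i)
end

section
/- Let ∂ be the unique ℤ-linear derivation on ℤ[x_1,…,x_n] with ∂(x_i) = x_i² for all i, let h_j denote the j-th complete homogeneous symmetric polynomial in x_1,…,x_n (with h_0 = 1), and define the ℤ-linear operator D on ℤ[x_1,…,x_n] by D(f) = ∂(f) + f·h_1. Then for every k ≥ 0 and every polynomial f, D^k(f) = Σ_{i=0}^{k} (k!/i!)·∂^i(f)·h_{k−i}. -/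
open MvPolynomial

private lemma msum_univ {n : ℕ} {M : Type*} [AddCommMonoid M] (s : Multiset (Fin n)) (f : Fin n → M) :
    (s.map f).sum = ∑ i : Fin n, s.count i • f i := by
  rw [Finset.sum_multiset_map_count]
  exact Finset.sum_subset (Finset.subset_univ _) fun i _ hi => by
    simp [Multiset.count_eq_zero.2 (by simpa using hi)]

private lemma card_eq_sum_count' {n : ℕ} (s : Multiset (Fin n)) :
    Multiset.card s = ∑ i : Fin n, s.count i := by
  rw [← Multiset.toFinset_sum_count_eq]
  exact Finset.sum_subset (Finset.subset_univ _) fun i _ hi => by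
    simpa using Multiset.count_eq_zero.2 (by simpa using hi)

private lemma delProd {n : ℕ}
    (Del : Derivation ℤ (MvPolynomial (Fin n) ℤ) (MvPolynomial (Fin n) ℤ))
    (hDel : ∀ i, Del (X i) = X i ^ 2) (s : Multiset (Fin n)) :
    Del ((s.map X).prod) = (s.map (fun i => X i * (s.map X).prod)).sum := by
  induction s using Multiset.induction_on with
  | empty => simp
  | cons a t ih =>
    simp only [Multiset.map_cons, Multiset.prod_cons, Multiset.sum_cons]
    rw [Derivation.leibniz, smul_eq_mul, smul_eq_mul, ih, hDel]
    rw [show (Multiset.map (fun x => X x * ((X a:MvPolynomial (Fin n) ℤ) * (Multiset.map X t).prod)) t)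
        = Multiset.map (fun x => X a * (X x * (Multiset.map X t).prod)) t from
      Multiset.map_congr rfl fun i _ => by ring]
    rw [← Multiset.sum_map_mul_left]
    ring

private lemma prodX_ne_zero {n : ℕ} (s : Multiset (Fin n)) :
    ((s.map X).prod : MvPolynomial (Fin n) ℤ) ≠ 0 :=
  Multiset.prod_ne_zero (by
    simp only [Multiset.mem_map, not_exists]
    rintro i ⟨-, h⟩
    exact X_ne_zero i h)

private lemma keyH {n : ℕ}
    (Del : Derivation ℤ (MvPolynomial (Fin n) ℤ) (MvPolynomial (Fin n) ℤ))
    (hDel : ∀ i, Del (X i) = X i ^ 2) (m : ℕ) :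
    Del (hsymm (Fin n) ℤ m) + hsymm (Fin n) ℤ m * hsymm (Fin n) ℤ 1
      = (m + 1) • hsymm (Fin n) ℤ (m + 1) := by
  rw [hsymm_one]
  simp only [hsymm]
  rw [map_sum, Finset.sum_mul, ← Finset.sum_add_distrib, Finset.smul_sum]
  have lhs : ∀ s : Sym (Fin n) m,
      Del ((s.1.map X).prod) + (s.1.map X).prod * ∑ i : Fin n, X i
        = ∑ i : Fin n, (s.1.count i + 1) • (X i * (s.1.map X).prod) := by
    intro s
    rw [delProd Del hDel, msum_univ, Finset.mul_sum, ← Finset.sum_add_distrib]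
    refine Finset.sum_congr rfl fun i _ => ?_
    rw [add_smul, one_smul, mul_comm ((s.1.map X).prod)]
  have rhs : ∀ t : Sym (Fin n) (m + 1),
      (m + 1) • ((t.1.map X).prod : MvPolynomial (Fin n) ℤ)
        = ∑ i : Fin n, t.1.count i • (t.1.map X).prod := by
    intro t
    rw [← Finset.sum_smul, ← card_eq_sum_count', t.2]
  simp only [lhs, rhs]
  rw [← Finset.sum_product', ← Finset.sum_product']
  refine Finset.sum_bij_ne_zero (fun p _ _ => (p.2 ::ₛ p.1, p.2)) ?_ ?_ ?_ ?_
  · intro a h₁ h₂; exact Finset.mem_univ _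
  · rintro ⟨s, i⟩ h₁₁ h₁₂ ⟨u, j⟩ h₂₁ h₂₂ heq
    simp only [Prod.mk.injEq] at heq
    obtain ⟨hc, rfl⟩ := heq
    refine Prod.ext ?_ rfl
    have : (i ::ₘ s.1 : Multiset (Fin n)) = i ::ₘ u.1 := by
      have := congrArg Sym.toMultiset hc
      simpa [Sym.coe_cons] using this
    exact Subtype.ext ((Multiset.cons_inj_right i).mp this)
  · rintro ⟨t, i⟩ - hg
    have hcount : t.1.count i ≠ 0 := by
      intro h; apply hg; rw [h, zero_smul]
    have hmem : i ∈ t.1 := Multiset.count_pos.mp (Nat.pos_of_ne_zero hcount)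
    refine ⟨(⟨t.1.erase i, by
        rw [Multiset.card_erase_of_mem hmem, t.2]; rfl⟩, i), Finset.mem_univ _, ?_, ?_⟩
    · apply smul_ne_zero
      · exact Nat.succ_ne_zero _
      · exact mul_ne_zero (X_ne_zero i) (prodX_ne_zero _)
    · refine Prod.ext (Subtype.ext ?_) rfl
      simp only [Sym.coe_cons]
      exact Multiset.cons_erase hmem
  · rintro ⟨s, i⟩ - -
    simp [Sym.coe_cons, Multiset.count_cons_self]

private lemma rec1 (k i : ℕ) (hik : i ≤ k) :
    (k + 1).factorial / (i + 1).factorial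
      = k.factorial / i.factorial + (k - i) * (k.factorial / (i + 1).factorial) := by
  rcases eq_or_lt_of_le hik with rfl | h
  · simp [Nat.div_self (Nat.factorial_pos _), Nat.sub_self]
  · obtain ⟨c, hc⟩ := Nat.factorial_dvd_factorial hik
    obtain ⟨d, hd⟩ := Nat.factorial_dvd_factorial (show i + 1 ≤ k from h)
    have hcd : c = (i + 1) * d := by
      refine Nat.eq_of_mul_eq_mul_left (Nat.factorial_pos i) ?_
      rw [← hc]
      rw [hd, Nat.factorial_succ]; ring
    have e1 : k.factorial / i.factorial = c := by
      rw [hc, Nat.mul_div_cancel_left _ (Nat.factorial_pos _)]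
    have e2 : k.factorial / (i + 1).factorial = d := by
      rw [hd, Nat.mul_div_cancel_left _ (Nat.factorial_pos _)]
    have e3 : (k + 1).factorial / (i + 1).factorial = (k + 1) * d := by
      rw [Nat.factorial_succ k, hd,
        show (k + 1) * ((i + 1).factorial * d) = (i + 1).factorial * ((k + 1) * d) by ring,
        Nat.mul_div_cancel_left _ (Nat.factorial_pos _)]
    rw [e1, e2, e3, hcd, ← add_mul]
    congr 1
    omega

/-- Let `∂` be the derivation on `ℤ[x_1,…,x_n]` with `∂(x_i) = x_i²`, let
`h_j` be the complete homogeneous symmetric polynomials, and let `D(f) = ∂(f) + f·h₁`.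
Then `D^k(f) = Σ_{i=0}^{k} (k!/i!)·∂^i(f)·h_{k-i}`. -/
theorem twisted_derivation_iterate_h (n : ℕ)
    (Del : Derivation ℤ (MvPolynomial (Fin n) ℤ) (MvPolynomial (Fin n) ℤ))
    (hDel : ∀ i, Del (X i) = X i ^ 2)
    (D : Module.End ℤ (MvPolynomial (Fin n) ℤ))
    (hD : ∀ f, D f = Del f + f * hsymm (Fin n) ℤ 1) :
    ∀ (k : ℕ) (f : MvPolynomial (Fin n) ℤ),
      (D ^ k) f = ∑ i ∈ Finset.range (k + 1),
        (k.factorial / i.factorial) • ((Del.toLinearMap ^ i) f * hsymm (Fin n) ℤ (k - i)) := by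
  intro k
  induction k with
  | zero => intro f; simp [hsymm_zero]
  | succ k ih =>
    intro f
    have hstep : ∀ (g : MvPolynomial (Fin n) ℤ) (m : ℕ),
        D (g * hsymm (Fin n) ℤ m)
          = Del g * hsymm (Fin n) ℤ m + (m + 1) • (g * hsymm (Fin n) ℤ (m + 1)) := by
      intro g m
      rw [hD, Derivation.leibniz, smul_eq_mul, smul_eq_mul, ← mul_smul_comm,
        ← keyH Del hDel m]
      ring
    rw [pow_succ', Module.End.mul_apply, ih, map_sum]
    have expand : ∀ i ∈ Finset.range (k + 1),
        D ((k.factorial / i.factorial) •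
            ((Del.toLinearMap ^ i) f * hsymm (Fin n) ℤ (k - i)))
          = (k.factorial / i.factorial) •
              ((Del.toLinearMap ^ (i + 1)) f * hsymm (Fin n) ℤ (k - i))
            + ((k.factorial / i.factorial) * (k + 1 - i)) •
              ((Del.toLinearMap ^ i) f * hsymm (Fin n) ℤ (k + 1 - i)) := by
      intro i hi
      have hik : i ≤ k := Nat.lt_succ_iff.mp (Finset.mem_range.mp hi)
      have hpow : (Del.toLinearMap ^ (i + 1)) f = Del ((Del.toLinearMap ^ i) f) := by
        rw [pow_succ', Module.End.mul_apply]; rfl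
      rw [map_nsmul, hstep, smul_add, smul_smul, hpow,
        show k - i + 1 = k + 1 - i from by omega]
    rw [Finset.sum_congr rfl expand, Finset.sum_add_distrib]
    -- rewrite the first sum over range (k+2)
    have hS1 : (∑ i ∈ Finset.range (k + 2),
            (Nat.casesOn i 0 (fun j => (k.factorial / j.factorial) •
              ((Del.toLinearMap ^ (j + 1)) f * hsymm (Fin n) ℤ (k - j))) :
                MvPolynomial (Fin n) ℤ))
        = ∑ i ∈ Finset.range (k + 1), (k.factorial / i.factorial) •
            ((Del.toLinearMap ^ (i + 1)) f * hsymm (Fin n) ℤ (k - i)) := by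
      rw [Finset.sum_range_succ']
      exact add_zero _
    have hS2 : (∑ i ∈ Finset.range (k + 2),
            ((k.factorial / i.factorial) * (k + 1 - i)) •
              ((Del.toLinearMap ^ i) f * hsymm (Fin n) ℤ (k + 1 - i)))
        = ∑ i ∈ Finset.range (k + 1),
            ((k.factorial / i.factorial) * (k + 1 - i)) •
              ((Del.toLinearMap ^ i) f * hsymm (Fin n) ℤ (k + 1 - i)) := by
      rw [Finset.sum_range_succ]
      simp
    rw [← hS1, ← hS2, ← Finset.sum_add_distrib]
    refine Finset.sum_congr rfl fun i hi => ?_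
    have hik : i < k + 2 := Finset.mem_range.mp hi
    match i with
    | 0 =>
      simp only [Nat.factorial_zero, Nat.div_one, Nat.sub_zero]
      rw [Nat.factorial_succ, mul_comm (k + 1) k.factorial]
      exact zero_add _
    | j + 1 =>
      have hjk : j ≤ k := by omega
      simp only [Nat.succ_sub_succ]
      rw [rec1 k j hjk, add_smul, mul_comm (k.factorial / (j + 1).factorial)]
end

section
/- Let ∂ be the unique ℤ-linear derivation on ℤ[x_1,…,x_n] with ∂(x_i) = x_i² for all i, let e_j denote the j-th elementary symmetric polynomial in x_1,…,x_n (with e_0 = 1 and e_j = 0 for j > n), and define the ℤ-linear operator E on ℤ[x_1,…,x_n] by E(f) = ∂(f) − f·e_1. Then for every k ≥ 0 and every polynomial f, E^k(f) = Σ_{i=0}^{k} (−1)^{k−i}·(k!/i!)·∂^i(f)·e_{k−i}. -/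
open MvPolynomial Finset

private lemma del_prod {n : ℕ} (Del : Derivation ℤ (MvPolynomial (Fin n) ℤ) (MvPolynomial (Fin n) ℤ))
    (hDel : ∀ i, Del (X i) = X i ^ 2) (A : Finset (Fin n)) :
    Del (∏ j ∈ A, X j) = (∑ i ∈ A, X i) * ∏ j ∈ A, X j := by
  induction A using Finset.induction_on with
  | empty => simp
  | @insert a s h ih =>
      rw [Finset.prod_insert h, Derivation.leibniz, hDel, ih, Finset.sum_insert h]
      simp only [smul_eq_mul]
      ring

private lemma count_lemma (n k : ℕ) :
    ∑ A ∈ powersetCard k (univ : Finset (Fin n)), ∑ i ∈ Aᶜ,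
        ∏ j ∈ insert i A, (X j : MvPolynomial (Fin n) ℤ)
      = (k + 1) • esymm (Fin n) ℤ (k + 1) := by
  have hR : (k + 1) • esymm (Fin n) ℤ (k + 1)
      = ∑ B ∈ powersetCard (k+1) (univ : Finset (Fin n)), ∑ i ∈ B, ∏ j ∈ B, X j := by
    rw [esymm, smul_sum]
    refine Finset.sum_congr rfl fun B hB => ?_
    rw [Finset.sum_const, (Finset.mem_powersetCard.mp hB).2]
  rw [hR, Finset.sum_sigma', Finset.sum_sigma']
  refine Finset.sum_bij' (fun p _ => ⟨insert p.2 p.1, p.2⟩)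
    (fun p _ => ⟨p.1.erase p.2, p.2⟩) ?_ ?_ ?_ ?_ ?_
  · rintro ⟨A, i⟩ hp
    simp only [Finset.mem_sigma, Finset.mem_powersetCard, Finset.mem_compl] at hp ⊢
    refine ⟨⟨Finset.subset_univ _, ?_⟩, Finset.mem_insert_self _ _⟩
    rw [Finset.card_insert_of_notMem hp.2, hp.1.2]
  · rintro ⟨B, i⟩ hp
    simp only [Finset.mem_sigma, Finset.mem_powersetCard, Finset.mem_compl] at hp ⊢
    refine ⟨⟨Finset.subset_univ _, ?_⟩, Finset.notMem_erase _ _⟩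
    rw [Finset.card_erase_of_mem hp.2, hp.1.2]
    omega
  · rintro ⟨A, i⟩ hp
    simp only [Finset.mem_sigma, Finset.mem_compl] at hp
    simp [Finset.erase_insert_of_ne, Finset.erase_insert hp.2]
  · rintro ⟨B, i⟩ hp
    simp only [Finset.mem_sigma] at hp
    simp [Finset.insert_erase hp.2]
  · rintro ⟨A, i⟩ hp
    rfl

private lemma del_esymm {n : ℕ} (Del : Derivation ℤ (MvPolynomial (Fin n) ℤ) (MvPolynomial (Fin n) ℤ))
    (hDel : ∀ i, Del (X i) = X i ^ 2) (k : ℕ) :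
    Del (esymm (Fin n) ℤ k) = esymm (Fin n) ℤ 1 * esymm (Fin n) ℤ k
      - (((k : ℤ) + 1)) • esymm (Fin n) ℤ (k + 1) := by
  conv_lhs => rw [esymm]
  rw [map_sum]
  have h1 : esymm (Fin n) ℤ 1 * esymm (Fin n) ℤ k
      = ∑ A ∈ powersetCard k (univ : Finset (Fin n)), (∑ i, (X i : MvPolynomial (Fin n) ℤ)) * ∏ j ∈ A, X j := by
    rw [esymm_one, esymm, Finset.mul_sum]
  rw [h1]
  have h2 : ∀ A ∈ powersetCard k (univ : Finset (Fin n)),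
      (∑ i, (X i : MvPolynomial (Fin n) ℤ)) * ∏ j ∈ A, X j
        = (∑ i ∈ A, X i) * ∏ j ∈ A, X j + ∑ i ∈ Aᶜ, ∏ j ∈ insert i A, X j := by
    intro A hA
    have hsplit : (∑ i, (X i : MvPolynomial (Fin n) ℤ)) = (∑ i ∈ A, X i) + ∑ i ∈ Aᶜ, X i :=
      (Finset.sum_add_sum_compl A (fun i => (X i : MvPolynomial (Fin n) ℤ))).symm
    rw [hsplit, add_mul]
    congr 1
    rw [Finset.sum_mul]
    refine Finset.sum_congr rfl fun i hi => ?_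
    rw [Finset.prod_insert (Finset.mem_compl.mp hi)]
  rw [Finset.sum_congr rfl h2, Finset.sum_add_distrib, count_lemma]
  have : ((k : ℤ) + 1) • esymm (Fin n) ℤ (k + 1) = (k + 1) • esymm (Fin n) ℤ (k + 1) := by
    rw [← Nat.cast_succ, natCast_zsmul]
  rw [this]
  simp [del_prod Del hDel]

private lemma fac_step (i k : ℕ) (h : i + 1 ≤ k) :
    k.factorial / i.factorial = (i + 1) * (k.factorial / (i+1).factorial) := by
  obtain ⟨c, hc⟩ := Nat.factorial_dvd_factorial h
  rw [hc, Nat.mul_div_cancel_left _ (Nat.factorial_pos _)]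
  have h2 : (i+1).factorial * c = ((i + 1) * c) * i.factorial := by
    rw [Nat.factorial_succ]; ring
  rw [h2, Nat.mul_div_cancel _ i.factorial_pos]

private lemma fac_succ (i k : ℕ) (h : i ≤ k) :
    (k+1).factorial / i.factorial = (k+1) * (k.factorial / i.factorial) := by
  rw [Nat.factorial_succ, Nat.mul_div_assoc _ (Nat.factorial_dvd_factorial h)]

private lemma coeff_step (k i : ℕ) (h : i < k) :
    (-1:ℤ)^(k-i) * ((k.factorial / i.factorial : ℕ) : ℤ)
      + (-(((k - (i+1) : ℕ) : ℤ) + 1)) * ((-1:ℤ)^(k-(i+1)) * ((k.factorial / (i+1).factorial : ℕ) : ℤ))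
      = (-1:ℤ)^(k+1-(i+1)) * (((k+1).factorial / (i+1).factorial : ℕ) : ℤ) := by
  obtain ⟨d, rfl⟩ : ∃ d, k = i + 1 + d := ⟨k - (i+1), by omega⟩
  have h1 : i + 1 + d - i = d + 1 := by omega
  have h2 : i + 1 + d - (i+1) = d := by omega
  have h3 : i + 1 + d + 1 - (i + 1) = d + 1 := by omega
  rw [h1, h2, h3, fac_step i _ (by omega), fac_succ (i+1) _ (by omega)]
  push_cast
  ring


/-- Let `∂` be the derivation on `ℤ[x_1,…,x_n]` with `∂(x_i) = x_i²`, let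
`e_j` be the elementary symmetric polynomials, and let `E(f) = ∂(f) - f·e₁`.
Then `E^k(f) = Σ_{i=0}^{k} (-1)^{k-i}·(k!/i!)·∂^i(f)·e_{k-i}`. -/
theorem twisted_derivation_iterate_e (n : ℕ)
    (Del : Derivation ℤ (MvPolynomial (Fin n) ℤ) (MvPolynomial (Fin n) ℤ))
    (hDel : ∀ i, Del (X i) = X i ^ 2)
    (E : Module.End ℤ (MvPolynomial (Fin n) ℤ))
    (hE : ∀ f, E f = Del f - f * esymm (Fin n) ℤ 1) :
    ∀ (k : ℕ) (f : MvPolynomial (Fin n) ℤ),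
      (E ^ k) f = ∑ i ∈ Finset.range (k + 1),
        ((-1 : ℤ) ^ (k - i) * ((k.factorial / i.factorial : ℕ) : ℤ)) •
          ((Del.toLinearMap ^ i) f * esymm (Fin n) ℤ (k - i)) := by
  intro k f
  induction k with
  | zero => simp [esymm_zero]
  | succ k ih =>
    have hg : ∀ i, Del ((Del.toLinearMap ^ i) f) = (Del.toLinearMap ^ (i+1)) f := by
      intro i; rw [pow_succ']; rfl
    have hterm : ∀ i ∈ Finset.range (k+1),
        Del (((-1 : ℤ) ^ (k - i) * ((k.factorial / i.factorial : ℕ) : ℤ)) •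
            ((Del.toLinearMap ^ i) f * esymm (Fin n) ℤ (k - i)))
          - (((-1 : ℤ) ^ (k - i) * ((k.factorial / i.factorial : ℕ) : ℤ)) •
            ((Del.toLinearMap ^ i) f * esymm (Fin n) ℤ (k - i))) * esymm (Fin n) ℤ 1
        = ((-1 : ℤ) ^ (k - i) * ((k.factorial / i.factorial : ℕ) : ℤ)) •
            ((Del.toLinearMap ^ (i+1)) f * esymm (Fin n) ℤ (k - i))
          + ((-(((k - i : ℕ) : ℤ) + 1)) * ((-1 : ℤ) ^ (k - i) * ((k.factorial / i.factorial : ℕ) : ℤ))) •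
            ((Del.toLinearMap ^ i) f * esymm (Fin n) ℤ (k - i + 1)) := by
      intro i hi
      rw [Derivation.map_smul, Derivation.leibniz, del_esymm Del hDel (k-i), hg i,
        smul_mul_assoc]
      simp only [smul_eq_mul, zsmul_eq_mul]
      push_cast
      ring
    rw [pow_succ', Module.End.mul_apply, ih, hE, map_sum, Finset.sum_mul,
      ← Finset.sum_sub_distrib, Finset.sum_congr rfl hterm, Finset.sum_add_distrib]
    have hAB : ∀ i ∈ Finset.range k,
        (((-1:ℤ)^(k-i) * ((k.factorial / i.factorial : ℕ):ℤ)) •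
            ((Del.toLinearMap ^ (i+1)) f * esymm (Fin n) ℤ (k-i)))
          + ((-(((k-(i+1):ℕ):ℤ)+1) * ((-1:ℤ)^(k-(i+1)) * ((k.factorial / (i+1).factorial : ℕ):ℤ))) •
            ((Del.toLinearMap ^ (i+1)) f * esymm (Fin n) ℤ (k-(i+1)+1)))
        = ((-1:ℤ)^(k+1-(i+1)) * (((k+1).factorial / (i+1).factorial : ℕ):ℤ)) •
            ((Del.toLinearMap ^ (i+1)) f * esymm (Fin n) ℤ (k+1-(i+1))) := by
      intro i hi
      have hi' : i < k := Finset.mem_range.mp hi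
      have hc := coeff_step k i hi'
      have e1 : k - (i+1) + 1 = k - i := by omega
      have e2 : k + 1 - (i + 1) = k - i := by omega
      rw [e2] at hc ⊢
      rw [e1, ← add_smul, hc]
    have hsum := Finset.sum_congr rfl hAB
    rw [Finset.sum_add_distrib] at hsum
    have hk : (((-1:ℤ)^(k-k) * ((k.factorial / k.factorial : ℕ):ℤ)) •
            ((Del.toLinearMap ^ (k+1)) f * esymm (Fin n) ℤ (k-k)))
        = ((-1:ℤ)^(k+1-(k+1)) * (((k+1).factorial / (k+1).factorial : ℕ):ℤ)) •
            ((Del.toLinearMap ^ (k+1)) f * esymm (Fin n) ℤ (k+1-(k+1))) := by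
      simp [Nat.div_self (Nat.factorial_pos _)]
    have h0 : ((-(((k-0:ℕ):ℤ)+1) * ((-1:ℤ)^(k-0) * ((k.factorial / Nat.factorial 0 : ℕ):ℤ))) •
            ((Del.toLinearMap ^ 0) f * esymm (Fin n) ℤ (k-0+1)))
        = ((-1:ℤ)^(k+1-0) * (((k+1).factorial / Nat.factorial 0 : ℕ):ℤ)) •
            ((Del.toLinearMap ^ 0) f * esymm (Fin n) ℤ (k+1-0)) := by
      simp only [Nat.sub_zero, Nat.factorial_zero, Nat.div_one]
      congr 1
      rw [Nat.factorial_succ]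
      push_cast
      ring
    conv_lhs => rw [Finset.sum_range_succ, Finset.sum_range_succ']
    conv_rhs => rw [Finset.sum_range_succ, Finset.sum_range_succ']
    linear_combination hsum + hk + h0
end

section
/- Let p be a prime, let c ∈ ℤ, let ∂ be the unique ℤ-linear derivation on ℤ[x_1,…,x_n] with ∂(x_i) = x_i² for all i, and let e_1 = x_1 + ⋯ + x_n. Define the ℤ-linear operator D_c on ℤ[x_1,…,x_n] by D_c(f) = ∂(f) + c·e_1·f. Then for every polynomial f, D_c^p(f) is divisible by p, i.e. D_c^p(f) ∈ p·ℤ[x_1,…,x_n]. -/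
/-!
Replace `c` by a natural number `t ≡ c (mod p)`; then `D_c ≡ D_t` modulo `p`, and so are their
`p`-th iterates. With `m = x_1 ⋯ x_n` we have `∂m = e₁m`, so multiplication by `m^t` intertwines
`D_t` with `∂`: `m^t D_t^p(f) = ∂^p(m^t f)`. By the Leibniz rule `∂^p` is a derivation modulo `p`,
and `∂^p(x_i) = p! x_i^(p+1)`, hence `∂^p ≡ 0` modulo `p`. Finally `m^t` is not a zero divisor
modulo `p`, because `(ℤ ⧸ p)[x_1, …, x_n]` is a domain.
-/

open Finset MvPolynomial

namespace Derivation

section CommSemiring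

variable {R A : Type*} [CommSemiring R] [CommSemiring A] [Algebra R A] (D : Derivation R A A)

theorem iterate_apply_mul (n : ℕ) (a b : A) :
    D^[n] (a * b) = ∑ ij ∈ antidiagonal n, n.choose ij.1 • (D^[ij.1] a * D^[ij.2] b) := by
  induction n with
  | zero => simp
  | succ n ih =>
    rw [sum_antidiagonal_choose_succ_nsmul (fun i j ↦ D^[i] a * D^[j] b) n]
    simp only [Function.iterate_succ_apply', ih, map_sum, map_nsmul, leibniz, smul_eq_mul,
      smul_add, sum_add_distrib]
    congr 1
    refine sum_congr rfl fun ⟨i, j⟩ hij ↦ ?_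
    rw [n.choose_symm_of_eq_add (mem_antidiagonal.1 hij).symm, mul_comm]

theorem iterate_apply_of_apply_eq_sq {x : A} (h : D x = x ^ 2) (j : ℕ) :
    D^[j] x = j.factorial • x ^ (j + 1) := by
  induction j with
  | zero => simp
  | succ j ih =>
    rw [Function.iterate_succ_apply', ih, map_nsmul, leibniz_pow, h, Nat.factorial_succ]
    simp only [Nat.add_sub_cancel, smul_eq_mul, nsmul_eq_mul]
    push_cast
    ring

theorem apply_prod_of_apply_eq_mul {ι : Type*} (s : Finset ι) {x y : ι → A}
    (h : ∀ i ∈ s, D (x i) = y i * x i) : D (∏ i ∈ s, x i) = (∑ i ∈ s, y i) * ∏ i ∈ s, x i := by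
  classical
  induction s using Finset.induction_on with
  | empty => simp
  | insert a s ha ih =>
    rw [prod_insert ha, sum_insert ha, leibniz, ih fun i hi ↦ h i (mem_insert_of_mem hi),
      h a (mem_insert_self a s), smul_eq_mul, smul_eq_mul]
    ring

theorem apply_pow_of_apply_eq_mul {u a : A} (h : D u = a * u) (t : ℕ) :
    D (u ^ t) = (t * a) * u ^ t := by
  rcases t with _ | t
  · simp
  · rw [leibniz_pow, h, Nat.add_sub_cancel, smul_eq_mul, nsmul_eq_mul, pow_succ]
    ring

/-- For `D = ∂` and `a = c e₁` this is the paper's `D_c`. -/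
def twist (a : A) (f : A) : A := D f + a * f

theorem semiconj_mul_left_twist {u a : A} (h : D u = a * u) :
    Function.Semiconj (u * ·) (D.twist a) D := fun f ↦ by
  simp only [twist, leibniz, h, smul_eq_mul]
  ring

end CommSemiring

section CommRing

variable {R A : Type*} [CommSemiring R] [CommRing A] [Algebra R A] (D : Derivation R A A)
  {p : ℕ}

theorem natCast_dvd_iterate_prime_apply_mul_sub (hp : p.Prime) (a b : A) :
    (p : A) ∣ D^[p] (a * b) - (D^[p] a * b + a * D^[p] b) := by
  obtain ⟨q, rfl⟩ : ∃ q, p = q + 2 := ⟨p - 2, by have := hp.two_le; omega⟩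
  rw [iterate_apply_mul, Nat.sum_antidiagonal_succ, Nat.sum_antidiagonal_succ']
  simp only [Nat.choose_zero_right, Nat.choose_self, one_smul, Function.iterate_zero_apply]
  rw [show q + 1 + 1 = q + 2 from rfl]
  convert_to _ ∣
    ∑ ij ∈ antidiagonal q, (q + 2).choose (ij.1 + 1) • (D^[ij.1 + 1] a * D^[ij.2 + 1] b)
  · abel
  refine dvd_sum fun ⟨i, j⟩ hij ↦ ?_
  rw [nsmul_eq_mul]
  refine (Nat.cast_dvd_cast (hp.dvd_choose_self ?_ ?_)).mul_right _ <;>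
    rw [HasAntidiagonal.mem_antidiagonal] at hij <;> omega

theorem natCast_dvd_iterate_prime_apply_of_adjoin_eq_top (hp : p.Prime) {s : Set A}
    (hs : Algebra.adjoin R s = ⊤) (hD : ∀ x ∈ s, (p : A) ∣ D^[p] x) (a : A) :
    (p : A) ∣ D^[p] a := by
  have ha : a ∈ Algebra.adjoin R s := hs ▸ Algebra.mem_top
  induction ha using Algebra.adjoin_induction with
  | mem x hx => exact hD x hx
  | algebraMap r =>
    obtain ⟨q, rfl⟩ := Nat.exists_eq_succ_of_ne_zero hp.ne_zero
    simp [Function.iterate_succ_apply]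
  | add x y _ _ hx hy => simpa only [iterate_map_add] using dvd_add hx hy
  | mul x y _ _ hx hy =>
    exact (dvd_sub_left (dvd_add (hx.mul_right y) (hy.mul_left x))).mp
      (natCast_dvd_iterate_prime_apply_mul_sub D hp x y)

end CommRing

end Derivation

theorem natCast_dvd_iterate_sub_iterate {S F : Type*} [Ring S] [FunLike F S S]
    [AddMonoidHomClass F S S] (m : ℕ) (A : F) (B : S → S) (h : ∀ x, (m : S) ∣ A x - B x)
    (k : ℕ) (x : S) : (m : S) ∣ A^[k] x - B^[k] x := by
  induction k with
  | zero => simp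
  | succ k ih =>
    obtain ⟨y, hy⟩ := ih
    have hA : A (m * y) = m * A y := by rw [← nsmul_eq_mul, map_nsmul, nsmul_eq_mul]
    rw [Function.iterate_succ_apply', Function.iterate_succ_apply',
      show A (A^[k] x) = A (A^[k] x - B^[k] x) + A (B^[k] x) by rw [map_sub, sub_add_cancel], hy,
      hA, add_sub_assoc]
    exact dvd_add (dvd_mul_right _ _) (h _)

namespace MvPolynomial

variable {σ : Type*} {p : ℕ}

theorem natCast_dvd_iterate_prime_apply_of_apply_X_eq_sq {R : Type*} [CommRing R]
    (D : Derivation R (MvPolynomial σ R) (MvPolynomial σ R)) (hp : p.Prime)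
    (hD : ∀ i, D (X i) = X i ^ 2) (f : MvPolynomial σ R) :
    (p : MvPolynomial σ R) ∣ D^[p] f := by
  refine D.natCast_dvd_iterate_prime_apply_of_adjoin_eq_top hp adjoin_range_X ?_ f
  rintro _ ⟨i, rfl⟩
  rw [D.iterate_apply_of_apply_eq_sq (hD i), nsmul_eq_mul]
  exact (Nat.cast_dvd_cast (Nat.dvd_factorial hp.pos le_rfl)).mul_right _

variable [Fact p.Prime]

theorem natCast_dvd_of_dvd_mul_left {a g : MvPolynomial σ ℤ} (ha : ¬ (p : MvPolynomial σ ℤ) ∣ a)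
    (h : (p : MvPolynomial σ ℤ) ∣ a * g) : (p : MvPolynomial σ ℤ) ∣ g := by
  rw [← map_natCast C, C_dvd_iff_zmod] at ha h ⊢
  rw [map_mul] at h
  exact (mul_eq_zero.mp h).resolve_left ha

theorem not_natCast_dvd_prod_X_pow (s : Finset σ) (t : ℕ) :
    ¬ (p : MvPolynomial σ ℤ) ∣ (∏ i ∈ s, X i) ^ t := by
  rw [← map_natCast C, C_dvd_iff_zmod, map_pow, map_prod]
  simp only [map_X]
  exact pow_ne_zero _ (prod_ne_zero_iff.mpr fun i _ ↦ X_ne_zero i)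

end MvPolynomial

/-- Let `p` be a prime, `c ∈ ℤ`, `∂` the derivation on `ℤ[x_1,…,x_n]` with
`∂(x_i) = x_i²`, and `e₁ = x_1 + ⋯ + x_n`. If `D_c(f) = ∂(f) + c·e₁·f`, then `D_c^p(f)` is
divisible by `p` for every polynomial `f`. -/
theorem twisted_derivation_pow_p_dvd (p n : ℕ) (hp : p.Prime) (c : ℤ)
    (Del : Derivation ℤ (MvPolynomial (Fin n) ℤ) (MvPolynomial (Fin n) ℤ))
    (hDel : ∀ i, Del (X i) = X i ^ 2)
    (D : Module.End ℤ (MvPolynomial (Fin n) ℤ))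
    (hD : ∀ f, D f = Del f + C c * (∑ i, X i) * f) :
    ∀ f : MvPolynomial (Fin n) ℤ,
      (p : MvPolynomial (Fin n) ℤ) ∣ (D ^ p) f := by
  have := Fact.mk hp
  obtain ⟨t, ht⟩ : ∃ t : ℕ, (p : ℤ) ∣ c - t :=
    ⟨(c % p).toNat, by
      rw [Int.toNat_of_nonneg (Int.emod_nonneg c (by exact_mod_cast hp.ne_zero))]
      exact (Int.mod_modEq c p).dvd⟩
  set e : MvPolynomial (Fin n) ℤ := ∑ i, X i
  set m : MvPolynomial (Fin n) ℤ := ∏ i, X i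
  have hm : Del (m ^ t) = (t * e) * m ^ t :=
    Del.apply_pow_of_apply_eq_mul (Del.apply_prod_of_apply_eq_mul _ fun i _ ↦ by rw [hDel, sq]) t
  have htwist : ∀ g, (p : MvPolynomial (Fin n) ℤ) ∣ (Del.twist (t * e))^[p] g := fun g ↦ by
    refine natCast_dvd_of_dvd_mul_left (not_natCast_dvd_prod_X_pow univ t) ?_
    have hconj := (Del.semiconj_mul_left_twist hm).iterate_right p g
    rw [hconj]
    exact natCast_dvd_iterate_prime_apply_of_apply_X_eq_sq Del hp hDel _
  have hD_twist : ∀ g, (p : MvPolynomial (Fin n) ℤ) ∣ D g - Del.twist (t * e) g := fun g ↦ by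
    have hcoeff : C c * e - (t : MvPolynomial (Fin n) ℤ) * e = C (c - t) * e := by
      rw [map_sub, map_natCast]; ring
    rw [hD, Derivation.twist, add_sub_add_left_eq_sub, ← sub_mul, hcoeff, mul_assoc,
      ← map_natCast C]
    exact (map_dvd C ht).mul_right _
  intro f
  simpa [Module.End.pow_apply] using
    dvd_add (natCast_dvd_iterate_sub_iterate p D _ hD_twist p f) (htwist f)
end

section
/- Let k ≥ 1. The ring ℤ[x_1,…,x_k]^{S_{k−1}} of polynomials in x_1,…,x_k that are symmetric in the first k−1 variables x_1,…,x_{k−1} is a free module over the subring ℤ[x_1,…,x_k]^{S_k} of fully symmetric polynomials, with basis {1, x_k, x_k², …, x_k^{k−1}}. -/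
/-!
Let `S` be the ring of symmetric polynomials in `x_1, …, x_k`. A polynomial symmetric in
`x_1, …, x_{k-1}` is a polynomial in `x_k` whose coefficients are polynomials in the elementary
symmetric functions `e_i'` of `x_1, …, x_{k-1}`; since `e_{i+1} = e_{i+1}' + x_k e_i'`, each
`e_i'` lies in `S[x_k]`, hence so does the polynomial. As `x_k` is a root of the monic polynomial
`∏_j (T - x_j)` of degree `k` with coefficients in `S`, the powers `1, x_k, …, x_k^{k-1}` span
`S[x_k]` over `S`. They are independent: permuting variables turns a relation `∑ c_i x_k^i = 0`
into `∑ c_i x_j^i = 0` for every `j`, and the Vandermonde matrix of `x_1, …, x_k` is invertible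
since the `x_j` are distinct.
-/

open MvPolynomial

namespace Multiset

theorem esymm_cons_succ {R : Type*} [CommSemiring R] (a : R) (s : Multiset R) (n : ℕ) :
    (a ::ₘ s).esymm (n + 1) = s.esymm (n + 1) + a * s.esymm n := by
  simp only [esymm, powersetCard_cons, map_add, sum_add, map_map, Function.comp_def, prod_cons,
    sum_map_mul_left]

end Multiset

namespace MvPolynomial

section CommSemiring

variable {R : Type*} [CommSemiring R] {m : ℕ}

theorem esymm_fin_succ (n : ℕ) :
    esymm (Fin (m + 1)) R (n + 1) = rename Fin.castSucc (esymm (Fin m) R (n + 1)) +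
      X (Fin.last m) * rename Fin.castSucc (esymm (Fin m) R n) := by
  rw [rename_eq_aeval, aeval_esymm_eq_multiset_esymm, aeval_esymm_eq_multiset_esymm,
    esymm_eq_multiset_esymm, Fin.univ_castSuccEmb, Finset.cons_val, Multiset.map_cons,
    Multiset.esymm_cons_succ, Finset.map_val, Multiset.map_map]
  rfl

theorem IsSymmetric.mem_adjoin {σ : Type*} {p : MvPolynomial σ R} (hp : p.IsSymmetric)
    (s : Set (MvPolynomial σ R)) : p ∈ Algebra.adjoin (symmetricSubalgebra σ R) s :=
  Subalgebra.algebraMap_mem _ (⟨p, hp⟩ : symmetricSubalgebra σ R)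

theorem optionEquivLeft_rename_optionMap {σ τ : Type*} (e : σ → τ)
    (p : MvPolynomial (Option σ) R) :
    optionEquivLeft R τ (rename (Option.map e) p) =
      Polynomial.mapAlgHom (rename e) (optionEquivLeft R σ p) := by
  have : (optionEquivLeft R τ).toAlgHom.comp (rename (Option.map e)) =
      (Polynomial.mapAlgHom (rename e)).comp (optionEquivLeft R σ).toAlgHom := by
    ext i : 1
    cases i <;> simp
  exact AlgHom.congr_fun this p

variable (R m) in
noncomputable def finSuccLastEquiv :
    MvPolynomial (Fin (m + 1)) R ≃ₐ[R] Polynomial (MvPolynomial (Fin m) R) :=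
  (renameEquiv R finSuccEquivLast).trans (optionEquivLeft R (Fin m))

theorem finSuccLastEquiv_symm_C (g : MvPolynomial (Fin m) R) :
    (finSuccLastEquiv R m).symm (Polynomial.C g) = rename Fin.castSucc g := by
  rw [AlgEquiv.symm_apply_eq, finSuccLastEquiv, AlgEquiv.trans_apply, renameEquiv_apply,
    rename_rename]
  induction g using MvPolynomial.induction_on with
  | C r => simp
  | add p q hp hq => simp only [map_add, hp, hq]
  | mul_X p i hp => simp [hp]

theorem finSuccLastEquiv_symm_X :
    (finSuccLastEquiv R m).symm Polynomial.X = X (Fin.last m) := by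
  simp [finSuccLastEquiv]

theorem isSymmetric_coeff_finSuccLastEquiv {f : MvPolynomial (Fin (m + 1)) R}
    (hf : ∀ σ : Equiv.Perm (Fin (m + 1)), σ (Fin.last m) = Fin.last m → rename σ f = f)
    (n : ℕ) : ((finSuccLastEquiv R m f).coeff n).IsSymmetric := by
  intro e
  -- `τ` acts as `e` on the first `m` variables and fixes the last one.
  let τ : Equiv.Perm (Fin (m + 1)) := finSuccEquivLast.symm.permCongr e.optionCongr
  have hτ : Option.map e ∘ finSuccEquivLast = finSuccEquivLast ∘ τ := by
    ext i; simp [τ, Equiv.permCongr_apply]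
  have hfix :
      Polynomial.mapAlgHom (rename e) (finSuccLastEquiv R m f) = finSuccLastEquiv R m f := by
    rw [finSuccLastEquiv, AlgEquiv.trans_apply, ← optionEquivLeft_rename_optionMap,
      renameEquiv_apply, rename_rename, hτ, ← rename_rename,
      hf τ (by simp [τ, Equiv.permCongr_apply])]
  conv_rhs => rw [← hfix]
  rw [Polynomial.coe_mapAlgHom, Polynomial.coeff_map]
  rfl

end CommSemiring

section CommRing

variable {R : Type*} [CommRing R] {m : ℕ}

theorem rename_castSucc_esymm_mem_adjoin (n : ℕ) :
    rename Fin.castSucc (esymm (Fin m) R n) ∈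
      Algebra.adjoin (symmetricSubalgebra (Fin (m + 1)) R) {X (Fin.last m)} := by
  induction n with
  | zero => simp [esymm_zero]
  | succ n ih =>
    rw [eq_sub_of_add_eq (esymm_fin_succ (R := R) (m := m) n).symm]
    exact sub_mem ((esymm_isSymmetric _ _ _).mem_adjoin _)
      (mul_mem (Algebra.subset_adjoin (Set.mem_singleton _)) ih)

theorem IsSymmetric.rename_castSucc_mem_adjoin {g : MvPolynomial (Fin m) R}
    (hg : g.IsSymmetric) :
    rename Fin.castSucc g ∈
      Algebra.adjoin (symmetricSubalgebra (Fin (m + 1)) R) {X (Fin.last m)} := by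
  obtain ⟨q, hq⟩ := esymmAlgHom_surjective R (n := m) (Fintype.card_fin m).le ⟨g, hg⟩
  have hqg : aeval (fun i : Fin m => esymm (Fin m) R (i + 1)) q = g := by
    rw [← esymmAlgHom_apply, hq]
  rw [← hqg, ← AlgHom.comp_apply, comp_aeval, ← Subalgebra.mem_restrictScalars R]
  have hmem : aeval (fun i : Fin m => rename Fin.castSucc (esymm (Fin m) R (i + 1))) q ∈
      Algebra.adjoin R
        (Set.range fun i : Fin m => rename Fin.castSucc (esymm (Fin m) R (i + 1))) := by
    rw [Algebra.adjoin_range_eq_range_aeval]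
    exact AlgHom.mem_range_self _ q
  refine Algebra.adjoin_le (A := MvPolynomial (Fin (m + 1)) R) ?_ hmem
  exact Set.range_subset_iff.mpr fun i => rename_castSucc_esymm_mem_adjoin _

theorem mem_adjoin_X_last_of_forall_rename_eq {f : MvPolynomial (Fin (m + 1)) R}
    (hf : ∀ σ : Equiv.Perm (Fin (m + 1)), σ (Fin.last m) = Fin.last m → rename σ f = f) :
    f ∈ Algebra.adjoin (symmetricSubalgebra (Fin (m + 1)) R) {X (Fin.last m)} := by
  rw [← (finSuccLastEquiv R m).symm_apply_apply f,
    (finSuccLastEquiv R m f).as_sum_support_C_mul_X_pow, map_sum]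
  refine sum_mem fun n _ => ?_
  rw [map_mul, map_pow, finSuccLastEquiv_symm_C, finSuccLastEquiv_symm_X]
  exact mul_mem (isSymmetric_coeff_finSuccLastEquiv hf n).rename_castSucc_mem_adjoin
    (pow_mem (Algebra.subset_adjoin (Set.mem_singleton _)) n)

theorem exists_monic_natDegree_le_aeval_X_eq_zero {σ : Type*} [Fintype σ] (i : σ) :
    ∃ q : Polynomial (symmetricSubalgebra σ R),
      q.Monic ∧ q.natDegree ≤ Fintype.card σ ∧
        Polynomial.aeval (X i : MvPolynomial σ R) q = 0 := by
  let P : Polynomial (MvPolynomial σ R) := ∏ j, (Polynomial.X - Polynomial.C (X j))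
  have hP : P.Monic := Polynomial.monic_prod_of_monic _ _ fun j _ => Polynomial.monic_X_sub_C _
  have hsymm (n : ℕ) : (P.coeff n).IsSymmetric := fun e => by
    have hPe : P.map (rename e).toRingHom = P := by
      simp only [P, Polynomial.map_prod, Polynomial.map_sub, Polynomial.map_X, Polynomial.map_C]
      exact Fintype.prod_equiv e _ _ fun j => by simp
    simpa using congrArg (Polynomial.coeff · n) hPe
  obtain ⟨q, hqP, hdeg, hq⟩ := Polynomial.lifts_and_natDegree_eq_and_monic
    ((Polynomial.lifts_iff_coeff_lifts (f := algebraMap (symmetricSubalgebra σ R) _) P).mpr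
      fun n => ⟨(⟨_, hsymm n⟩ : symmetricSubalgebra σ R), rfl⟩) hP
  refine ⟨q, hq, hdeg ▸ (Polynomial.natDegree_prod_le (s := Finset.univ) (f := fun j =>
    Polynomial.X - Polynomial.C (X j : MvPolynomial σ R))).trans ?_, ?_⟩
  · exact (Finset.sum_le_sum fun j _ => Polynomial.natDegree_X_sub_C_le _).trans (by simp)
  · rw [Polynomial.aeval_def, Polynomial.eval₂_eq_eval_map, hqP, Polynomial.eval_prod]
    exact Finset.prod_eq_zero (Finset.mem_univ i) (by simp)

theorem exists_sum_mul_X_pow_eq_of_mem_adjoin {n : ℕ} (i : Fin n) {f : MvPolynomial (Fin n) R}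
    (hf : f ∈ Algebra.adjoin (symmetricSubalgebra (Fin n) R) {X i}) :
    ∃ c : Fin n → symmetricSubalgebra (Fin n) R,
      ∑ k : Fin n, (c k : MvPolynomial (Fin n) R) * X i ^ (k : ℕ) = f := by
  obtain ⟨q, hq, hdeg, hroot⟩ := exists_monic_natDegree_le_aeval_X_eq_zero (R := R) i
  rw [← Subalgebra.mem_toSubmodule, ← Submodule.span_range_natDegree_eq_adjoin hq hroot] at hf
  have hspan : f ∈ Submodule.span (symmetricSubalgebra (Fin n) R)
      (Set.range fun k : Fin n => (X i : MvPolynomial (Fin n) R) ^ (k : ℕ)) := by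
    refine Submodule.span_mono ?_ hf
    simp only [Finset.coe_image, Finset.coe_range, Set.image_subset_iff]
    exact fun k hk => ⟨⟨k, (Set.mem_Iio.mp hk).trans_le (by simpa using hdeg)⟩, rfl⟩
  obtain ⟨c, hc⟩ := (Submodule.mem_span_range_iff_exists_fun _).mp hspan
  exact ⟨c, by simpa [Algebra.smul_def] using hc⟩

theorem eq_zero_of_sum_mul_X_pow_eq_zero [IsDomain R] {n : ℕ}
    {c : Fin n → MvPolynomial (Fin n) R} (hc : ∀ k, (c k).IsSymmetric) (i : Fin n)
    (h : ∑ k : Fin n, c k * X i ^ (k : ℕ) = 0) : c = 0 := by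
  have hrow (j : Fin n) : ∑ k : Fin n, X j ^ (k : ℕ) * c k = 0 := by
    simpa [mul_comm, hc _ _] using congrArg (rename (Equiv.swap i j)) h
  exact Matrix.eq_zero_of_mulVec_eq_zero (Matrix.det_vandermonde_ne_zero_iff.mpr X_injective)
    (_root_.funext hrow)

end CommRing

end MvPolynomial

/-- For `k = m+1 ≥ 1`, the ring of polynomials in `x_1,…,x_k` that are
symmetric in the first `k-1` variables is a free module over the ring of fully symmetric
polynomials, with basis `{1, x_k, …, x_k^{k-1}}`: every such polynomial is uniquely a
combination `Σ c_i · x_k^i` with fully symmetric coefficients `c_i`. -/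
theorem partially_symmetric_free_over_symmetric (m : ℕ)
    (f : MvPolynomial (Fin (m + 1)) ℤ)
    (hf : ∀ σ : Equiv.Perm (Fin (m + 1)), σ (Fin.last m) = Fin.last m →
      rename (σ : Fin (m + 1) → Fin (m + 1)) f = f) :
    ∃! c : Fin (m + 1) → MvPolynomial (Fin (m + 1)) ℤ,
      (∀ i, (c i).IsSymmetric) ∧
      f = ∑ i : Fin (m + 1), c i * X (Fin.last m) ^ (i : ℕ) := by
  obtain ⟨c, hc⟩ :=
    exists_sum_mul_X_pow_eq_of_mem_adjoin (Fin.last m) (mem_adjoin_X_last_of_forall_rename_eq hf)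
  refine ⟨fun k => c k, ⟨fun k => (c k).2, hc.symm⟩, ?_⟩
  rintro d ⟨hd, rfl⟩
  have hdiff : (fun k => d k - c k) = 0 := by
    refine eq_zero_of_sum_mul_X_pow_eq_zero (fun k => (hd k).sub (c k).2) (Fin.last m) ?_
    simp only [sub_mul, Finset.sum_sub_distrib, hc, sub_self]
  funext k
  exact sub_eq_zero.mp (congrFun hdiff k)
end

section
/- Let a, b ≥ 1, let P ∈ ℤ[y_1,…,y_a] be a symmetric polynomial in a variables and Q ∈ ℤ[z_1,…,z_b] a symmetric polynomial in b variables. In the field of fractions of ℤ[x_1,…,x_{a+b}], consider Z(P,Q) := Σ_{I ⊔ J = {1,…,a+b}, |I| = a, |J| = b} P(x_I)·Q(x_J) / ∏_{j ∈ J} ∏_{i ∈ I} (x_j − x_i), where P(x_I) denotes P evaluated at the variables indexed by I (in any order, which is well defined by symmetry) and similarly for Q(x_J). Then Z(P,Q) is the image of a polynomial: there exists R ∈ ℤ[x_1,…,x_{a+b}], symmetric in all a+b variables, whose image in the fraction field equals Z(P,Q). -/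
open MvPolynomial

/-- The cardinality of a member of `powersetCard a univ`. -/
theorem ZS.card_eq {n a : ℕ}
    (I : {s // s ∈ Finset.powersetCard a (Finset.univ : Finset (Fin n))}) :
    I.1.card = a :=
  (Finset.mem_powersetCard.mp I.2).2

/-- The cardinality of the complement of a member of `powersetCard a univ` in `Fin (a+b)`. -/
theorem ZS.card_compl_eq {a b : ℕ}
    (I : {s // s ∈ Finset.powersetCard a (Finset.univ : Finset (Fin (a + b)))}) :
    I.1ᶜ.card = b := by
  have h := ZS.card_eq I
  simp [Finset.card_compl, h]

/-- Evaluation `P(x_I)` of a polynomial in `a` variables at the variables indexed by a subset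
`I` of cardinality `a`, taken in increasing order (for symmetric `P` this is independent of
the order). -/
noncomputable def ZS.evalAt {n a : ℕ} (I : Finset (Fin n)) (h : I.card = a)
    (P : MvPolynomial (Fin a) ℤ) : MvPolynomial (Fin n) ℤ :=
  aeval (fun t : Fin a => X ((I.orderIsoOfFin h t : {x // x ∈ I}) : Fin n)) P

/-- The sum `Z(P,Q) = Σ_{I ⊔ J = {1,…,a+b}, |I| = a} P(x_I)·Q(x_J) / ∏_{j∈J} ∏_{i∈I} (x_j - x_i)`
in the fraction field of `ℤ[x_1,…,x_{a+b}]`. -/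
noncomputable def ZS (a b : ℕ) (P : MvPolynomial (Fin a) ℤ) (Q : MvPolynomial (Fin b) ℤ) :
    FractionRing (MvPolynomial (Fin (a + b)) ℤ) :=
  ∑ I ∈ (Finset.powersetCard a (Finset.univ : Finset (Fin (a + b)))).attach,
    (algebraMap (MvPolynomial (Fin (a + b)) ℤ) (FractionRing (MvPolynomial (Fin (a + b)) ℤ))
        (ZS.evalAt I.1 (ZS.card_eq I) P) *
      algebraMap (MvPolynomial (Fin (a + b)) ℤ) (FractionRing (MvPolynomial (Fin (a + b)) ℤ))
        (ZS.evalAt I.1ᶜ (ZS.card_compl_eq I) Q)) /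
      ∏ j ∈ I.1ᶜ, ∏ i ∈ I.1,
        algebraMap (MvPolynomial (Fin (a + b)) ℤ) (FractionRing (MvPolynomial (Fin (a + b)) ℤ))
          (X j - X i)

/-! Every denominator `∏_{j ∈ J, i ∈ I} (x_j - x_i)` divides the Vandermonde product
`V = ∏_{i < j} (x_j - x_i)`, so `N := Z(P,Q) · V` is a polynomial. A permutation of the variables
permutes the summands of `Z(P,Q)` (this is where the symmetry of `P` and `Q` enters), so `Z(P,Q)`
is symmetric and `N` is alternating. An alternating polynomial over `ℤ` vanishes on `x_i = x_j`,
so it is divisible by each of the pairwise non-associated primes `x_j - x_i`, hence by `V`; the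
quotient `N / V = Z(P,Q)` is then a symmetric polynomial. -/

open Finset

lemma algebraMap_div_mul_mem_range_of_dvd {A K : Type*} [CommRing A] [Field K] [Algebra A K]
    {d v : A} (hdv : d ∣ v) (x : A) :
    algebraMap A K x / algebraMap A K d * algebraMap A K v ∈ (algebraMap A K).range := by
  obtain ⟨c, rfl⟩ := hdv
  rcases eq_or_ne (algebraMap A K d) 0 with hd | hd
  · simp [hd]
  · exact ⟨x * c, by rw [map_mul, map_mul]; field_simp⟩

lemma Finset.map_compl_equiv {α : Type*} [Fintype α] [DecidableEq α] (e : α ≃ α)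
    (s : Finset α) :
    sᶜ.map e.toEmbedding = (s.map e.toEmbedding)ᶜ := by
  ext x
  simp [Finset.mem_map_equiv]

namespace MvPolynomial

variable {R σ : Type*} [CommRing R] {i j k l : σ}

lemma prime_X_sub_X [IsDomain R] (hij : i ≠ j) : Prime (X j - X i : MvPolynomial σ R) := by
  classical
  let shear : MvPolynomial σ R ≃ₐ[R] MvPolynomial σ R := AlgEquiv.ofAlgHom
    (aeval (Function.update X j (X j - X i))) (aeval (Function.update X j (X j + X i)))
    (by ext k : 1; rcases eq_or_ne k j with rfl | hk <;> simp [*])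
    (by ext k : 1; rcases eq_or_ne k j with rfl | hk <;> simp [*])
  simpa [shear, hij] using (MulEquiv.prime_iff shear.toMulEquiv).2 (X_prime (R := R) (i := j))

lemma X_sub_X_dvd_of_aeval_update_eq_zero [DecidableEq σ] {p : MvPolynomial σ R}
    (hp : aeval (Function.update X j (X i) : σ → MvPolynomial σ R) p = 0) :
    X j - X i ∣ p := by
  set π := Ideal.Quotient.mkₐ R (Ideal.span {(X j - X i : MvPolynomial σ R)})
  have hπ : π.comp (aeval (Function.update X j (X i))) = π := by
    ext k : 1
    rcases eq_or_ne k j with rfl | hk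
    · have : π (X k) = π (X i) := by
        rw [← sub_eq_zero, ← map_sub]
        simp [π]
      simpa using this.symm
    · simp [hk]
  rw [← Ideal.mem_span_singleton, ← Ideal.Quotient.eq_zero_iff_mem,
    ← Ideal.Quotient.mkₐ_eq_mk R]
  change π p = 0
  rw [← hπ, AlgHom.comp_apply, hp, map_zero]

lemma X_sub_X_dvd_of_rename_swap_eq_neg [DecidableEq σ] [IsDomain R] [CharZero R]
    {p : MvPolynomial σ R} (hp : rename (Equiv.swap i j) p = -p) : X j - X i ∣ p := by
  apply X_sub_X_dvd_of_aeval_update_eq_zero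
  have hswap : aeval (Function.update X j (X i)) (rename (Equiv.swap i j) p)
      = aeval (Function.update X j (X i) : σ → MvPolynomial σ R) p := by
    rw [aeval_rename]
    congr 2
    funext k
    simp only [Function.comp_apply, Function.update_apply, Equiv.swap_apply_def]
    split_ifs <;> simp_all
  rw [hp, map_neg, neg_eq_iff_add_eq_zero] at hswap
  exact add_self_eq_zero.1 hswap

lemma mem_of_X_sub_X_dvd [Nontrivial R] (hij : i ≠ j)
    (h : (X l - X k : MvPolynomial σ R) ∣ X j - X i) : i = k ∨ i = l := by
  classical
  have := map_dvd (eval fun t => if t = i then (1 : R) else 0) h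
  by_contra! hkl
  simp [hij.symm, hkl.1.symm, hkl.2.symm] at this

lemma eq_or_eq_of_X_sub_X_dvd [Nontrivial R] (hij : i ≠ j)
    (h : (X l - X k : MvPolynomial σ R) ∣ X j - X i) :
    (k = i ∧ l = j) ∨ (k = j ∧ l = i) := by
  have hi := mem_of_X_sub_X_dvd hij h
  have hj := mem_of_X_sub_X_dvd hij.symm ((dvd_neg.2 h).trans (neg_sub _ _).dvd)
  grind

lemma prod_X_sub_X_dvd [IsDomain R] [UniqueFactorizationMonoid R] {S : Finset (σ × σ)}
    (hS : ∀ p ∈ S, p.1 ≠ p.2) (hS_swap : ∀ p ∈ S, p.swap ∉ S) {f : MvPolynomial σ R}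
    (hf : ∀ p ∈ S, X p.1 - X p.2 ∣ f) : ∏ p ∈ S, (X p.1 - X p.2) ∣ f := by
  refine prod_dvd_of_isRelPrime (fun p hp q hq hpq => ?_) hf
  rw [Function.onFun, ((prime_X_sub_X (hS p hp).symm).irreducible).isRelPrime_iff_not_dvd]
  intro h
  rcases eq_or_eq_of_X_sub_X_dvd (hS q hq).symm h with ⟨h1, h2⟩ | ⟨h1, h2⟩
  · exact hpq (Prod.ext h2 h1)
  · exact hS_swap q hq (by rwa [Prod.swap, ← h1, ← h2])

section Vandermonde

variable (R) (n : ℕ)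

noncomputable def vandermonde : MvPolynomial (Fin n) R :=
  (Matrix.vandermonde X).det

variable {R n}

lemma vandermonde_eq_prod :
    vandermonde R n = ∏ p ∈ {p : Fin n × Fin n | p.2 < p.1}, (X p.1 - X p.2) := by
  rw [vandermonde, Matrix.det_vandermonde,
    prod_finset_product_right _ univ (fun i => Ioi i) (by simp)]

lemma vandermonde_ne_zero [IsDomain R] : vandermonde R n ≠ 0 :=
  Matrix.det_vandermonde_ne_zero_iff.2 X_injective

lemma rename_vandermonde (e : Equiv.Perm (Fin n)) :
    rename e (vandermonde R n) = (Equiv.Perm.sign e : ℤ) • vandermonde R n := by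
  have : (Matrix.vandermonde X).map (rename e) =
      (Matrix.vandermonde (X : Fin n → MvPolynomial (Fin n) R)).submatrix e id := by
    ext i j
    simp [Matrix.vandermonde]
  rw [vandermonde, AlgHom.map_det, AlgHom.mapMatrix_apply, this, Matrix.det_permute,
    zsmul_eq_mul]

lemma X_sub_X_dvd_vandermonde {i j : Fin n} (hij : i ≠ j) :
    (X i - X j : MvPolynomial (Fin n) R) ∣ vandermonde R n := by
  rw [vandermonde_eq_prod]
  rcases hij.lt_or_gt with h | h
  · rw [← neg_sub, neg_dvd]
    exact dvd_prod_of_mem (fun p : Fin n × Fin n => (X p.1 - X p.2 : MvPolynomial (Fin n) R))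
      (a := (j, i)) (by simpa using h)
  · exact dvd_prod_of_mem (fun p : Fin n × Fin n => (X p.1 - X p.2 : MvPolynomial (Fin n) R))
      (a := (i, j)) (by simpa using h)

lemma vandermonde_dvd [IsDomain R] [UniqueFactorizationMonoid R] {f : MvPolynomial (Fin n) R}
    (hf : ∀ i j, j < i → X i - X j ∣ f) : vandermonde R n ∣ f := by
  rw [vandermonde_eq_prod]
  refine prod_X_sub_X_dvd (fun p hp => ?_) (fun p hp => ?_) (fun p hp => hf _ _ ?_) <;>
    simp only [mem_filter, mem_univ, true_and, Prod.fst_swap, Prod.snd_swap] at hp ⊢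
  · exact hp.ne'
  · exact hp.asymm
  · exact hp

lemma vandermonde_dvd_of_rename_swap_eq_neg [IsDomain R] [UniqueFactorizationMonoid R]
    [CharZero R] {f : MvPolynomial (Fin n) R}
    (hf : ∀ i j, i ≠ j → rename (Equiv.swap i j) f = -f) :
    vandermonde R n ∣ f :=
  vandermonde_dvd fun i j hji => X_sub_X_dvd_of_rename_swap_eq_neg (hf j i hji.ne)

lemma prod_X_sub_X_dvd_vandermonde [IsDomain R] [UniqueFactorizationMonoid R]
    (I : Finset (Fin n)) :
    ∏ j ∈ Iᶜ, ∏ i ∈ I, (X j - X i : MvPolynomial (Fin n) R) ∣ vandermonde R n := by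
  rw [← prod_product']
  refine prod_X_sub_X_dvd (fun p hp => ?_) (fun p hp => ?_) (fun p hp => ?_) <;>
    simp only [mem_product, mem_compl, Prod.fst_swap, Prod.snd_swap] at hp ⊢
  · exact fun h => hp.1 (h ▸ hp.2)
  · exact fun h => h.1 hp.2
  · exact X_sub_X_dvd_vandermonde fun h => hp.1 (h ▸ hp.2)

end Vandermonde

section FractionRing

noncomputable def renameFrac (e : σ ≃ σ) :
    FractionRing (MvPolynomial σ R) ≃+* FractionRing (MvPolynomial σ R) :=
  IsFractionRing.ringEquivOfRingEquiv (renameEquiv R e).toRingEquiv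

@[simp]
lemma renameFrac_algebraMap (e : σ ≃ σ) (p : MvPolynomial σ R) :
    renameFrac e (algebraMap _ _ p) =
      algebraMap _ (FractionRing (MvPolynomial σ R)) (rename e p) :=
  IsFractionRing.ringEquivOfRingEquiv_algebraMap _ p

lemma exists_isSymmetric_algebraMap_eq [IsDomain R] [UniqueFactorizationMonoid R] [CharZero R]
    {n : ℕ} {x : FractionRing (MvPolynomial (Fin n) R)} (hx : ∀ e, renameFrac e x = x)
    (hvx : x * algebraMap _ _ (vandermonde R n) ∈
      (algebraMap (MvPolynomial (Fin n) R) (FractionRing (MvPolynomial (Fin n) R))).range) :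
    ∃ p : MvPolynomial (Fin n) R, p.IsSymmetric ∧ algebraMap _ _ p = x := by
  have hinj := IsFractionRing.injective (MvPolynomial (Fin n) R)
    (FractionRing (MvPolynomial (Fin n) R))
  obtain ⟨N, hN⟩ := hvx
  have hN_alt : ∀ i j, i ≠ j → rename (Equiv.swap i j) N = -N := fun i j hij => hinj <| by
    rw [← renameFrac_algebraMap, hN, map_mul, hx, renameFrac_algebraMap, rename_vandermonde,
      Equiv.Perm.sign_swap hij]
    simp [hN]
  obtain ⟨p, rfl⟩ := vandermonde_dvd_of_rename_swap_eq_neg hN_alt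
  have hv : algebraMap _ (FractionRing (MvPolynomial (Fin n) R)) (vandermonde R n) ≠ 0 :=
    (map_ne_zero_iff _ hinj).2 vandermonde_ne_zero
  have hp : algebraMap _ _ p = x := mul_left_cancel₀ hv (by rw [← map_mul, hN, mul_comm])
  exact ⟨p, fun e => hinj (by rw [← renameFrac_algebraMap, hp, hx]), hp⟩

end FractionRing

end MvPolynomial

namespace ZS

variable {n a : ℕ} {P : MvPolynomial (Fin a) ℤ}

lemma evalAt_eq_aeval {I : Finset (Fin n)} (hI : I.card = a) (hP : P.IsSymmetric)
    (e : Fin a ≃ I) :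
    evalAt I hI P = aeval (fun t => X (e t : Fin n)) P := by
  conv_rhs => rw [← hP ((I.orderIsoOfFin hI).toEquiv.trans e.symm)]
  rw [evalAt, aeval_rename]
  congr 2
  funext t
  simp

lemma rename_evalAt {m : ℕ} (e : Fin n ≃ Fin m) {I : Finset (Fin n)} (hI : I.card = a)
    {J : Finset (Fin m)} (hJ : J.card = a) (hIJ : I.map e.toEmbedding = J) (hP : P.IsSymmetric) :
    rename e (evalAt I hI P) = evalAt J hJ P := by
  subst hIJ
  rw [evalAt_eq_aeval hJ hP ((I.orderIsoOfFin hI).toEquiv.trans (I.equivMap e.toEmbedding)),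
    evalAt, ← AlgHom.comp_apply, comp_aeval]
  congr 2
  funext t
  simp

end ZS

lemma renameFrac_ZS {a b : ℕ} (e : Equiv.Perm (Fin (a + b))) {P : MvPolynomial (Fin a) ℤ}
    (hP : P.IsSymmetric) {Q : MvPolynomial (Fin b) ℤ} (hQ : Q.IsSymmetric) :
    renameFrac e (ZS a b P Q) = ZS a b P Q := by
  have hmem (s : Finset (Fin (a + b))) :
      s ∈ powersetCard a univ ↔ e.finsetCongr s ∈ powersetCard a univ := by
    simp [Equiv.finsetCongr_apply]
  rw [ZS, map_sum, ← univ_eq_attach]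
  refine Fintype.sum_equiv (e.finsetCongr.subtypeEquiv hmem) _ _ fun I => ?_
  simp only [map_div₀, map_mul, map_prod, renameFrac_algebraMap, map_sub, rename_X,
    Equiv.subtypeEquiv_apply, Equiv.finsetCongr_apply]
  rw [ZS.rename_evalAt e _ (by simpa using ZS.card_eq I) rfl hP,
    ZS.rename_evalAt e _ (by simp [card_compl, ZS.card_eq I]) (Finset.map_compl_equiv e I.1) hQ]
  simp [← Finset.map_compl_equiv, Finset.prod_map]

lemma ZS_mul_vandermonde_mem_range (a b : ℕ) (P : MvPolynomial (Fin a) ℤ)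
    (Q : MvPolynomial (Fin b) ℤ) :
    ZS a b P Q * algebraMap _ _ (vandermonde ℤ (a + b)) ∈
      (algebraMap (MvPolynomial (Fin (a + b)) ℤ)
        (FractionRing (MvPolynomial (Fin (a + b)) ℤ))).range := by
  rw [ZS, sum_mul]
  refine Subring.sum_mem _ fun I _ => ?_
  simp only [← map_prod, ← map_mul]
  exact algebraMap_div_mul_mem_range_of_dvd (prod_X_sub_X_dvd_vandermonde I.1) _

theorem ZS_is_polynomial_general (a b : ℕ)
    (P : MvPolynomial (Fin a) ℤ) (hP : P.IsSymmetric)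
    (Q : MvPolynomial (Fin b) ℤ) (hQ : Q.IsSymmetric) :
    ∃ R : MvPolynomial (Fin (a + b)) ℤ, R.IsSymmetric ∧
      algebraMap (MvPolynomial (Fin (a + b)) ℤ) (FractionRing (MvPolynomial (Fin (a + b)) ℤ)) R
        = ZS a b P Q :=
  exists_isSymmetric_algebraMap_eq (fun e => renameFrac_ZS e hP hQ)
    (ZS_mul_vandermonde_mem_range a b P Q)

/-- For symmetric `P` in `a` variables and symmetric `Q` in `b` variables,
the element `Z(P,Q)` of the fraction field of `ℤ[x_1,…,x_{a+b}]` is (the image of) a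
symmetric polynomial. -/
theorem ZS_is_polynomial (a b : ℕ) (ha : 1 ≤ a) (hb : 1 ≤ b)
    (P : MvPolynomial (Fin a) ℤ) (hP : P.IsSymmetric)
    (Q : MvPolynomial (Fin b) ℤ) (hQ : Q.IsSymmetric) :
    ∃ R : MvPolynomial (Fin (a + b)) ℤ, R.IsSymmetric ∧
      algebraMap (MvPolynomial (Fin (a + b)) ℤ) (FractionRing (MvPolynomial (Fin (a + b)) ℤ)) R
        = ZS a b P Q :=
  ZS_is_polynomial_general a b P hP Q hQ
end

section
/- Let a, b ≥ 1 and let ∂ denote the unique derivation on the field of fractions of ℤ[x_1,…,x_{a+b}] extending the derivation of ℤ[x_1,…,x_{a+b}] with ∂(x_i) = x_i²; likewise let ∂ act on symmetric polynomials in y_1,…,y_a and z_1,…,z_b by the derivations with ∂(y_i) = y_i² and ∂(z_j) = z_j². For symmetric polynomials P in a variables and Q in b variables, set Z(P,Q) := Σ_{I ⊔ J = {1,…,a+b}, |I|=a} P(x_I)·Q(x_J) / ∏_{j ∈ J} ∏_{i ∈ I} (x_j − x_i), an element of the fraction field. Then ∂(Z(P,Q)) = Z(∂P, Q) + Z(P,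 ∂Q) − b·Z(e_1^{(a)}·P, Q) − a·Z(P, e_1^{(b)}·Q), where e_1^{(a)} = y_1 + ⋯ + y_a and e_1^{(b)} = z_1 + ⋯ + z_b. -/
open MvPolynomial

theorem aux_D_aeval {σ : Type*} {R : Type*} [CommRing R] [Algebra ℤ R]
    (D : Derivation ℤ R R) (Da : Derivation ℤ (MvPolynomial σ ℤ) (MvPolynomial σ ℤ))
    (f : MvPolynomial σ ℤ →ₐ[ℤ] R)
    (h : ∀ i, D (f (X i)) = f (Da (X i))) (P : MvPolynomial σ ℤ) :
    D (f P) = f (Da P) := by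
  induction P using MvPolynomial.induction_on with
  | C n =>
      rw [show (C n : MvPolynomial σ ℤ) = algebraMap ℤ _ n from rfl, AlgHom.commutes,
        Derivation.map_algebraMap, Derivation.map_algebraMap, map_zero]
  | add p q hp hq => simp [hp, hq]
  | mul_X p i hp =>
      simp only [map_mul, D.leibniz, hp, h, Derivation.leibniz, smul_eq_mul, map_add, map_mul]

theorem aux_D_prod {K : Type*} [CommRing K] [Algebra ℤ K] (D : Derivation ℤ K K) {ι : Type*} [DecidableEq ι]
    (s : Finset ι) (u v : ι → K) (h : ∀ k ∈ s, D (u k) = u k * v k) :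
    D (∏ k ∈ s, u k) = (∏ k ∈ s, u k) * ∑ k ∈ s, v k := by
  induction s using Finset.induction_on with
  | empty => simp
  | @insert k s hne ih =>
      rw [Finset.prod_insert hne, Finset.sum_insert hne, D.leibniz,
        ih (fun j hj => h j (Finset.mem_insert_of_mem hj)), h k (Finset.mem_insert_self k s),
        smul_eq_mul, smul_eq_mul]
      ring

theorem aux_term {K : Type*} [Field K] [Algebra ℤ K] (D : Derivation ℤ K K)
    (p q p' q' d eI eJ : K) (a b : ℕ)
    (hp : D p = p') (hq : D q = q') (hd : D d = d * ((a : K) * eJ + (b : K) * eI))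
    (hd0 : d ≠ 0) :
    D (p * q / d) =
      p' * q / d + p * q' / d - (b : K) * (eI * p * q / d) - (a : K) * (p * (eJ * q) / d) := by
  rw [Derivation.leibniz_div, D.leibniz, hp, hq, hd]
  simp only [smul_eq_mul, nsmul_eq_mul]
  field_simp
  ring

theorem ZS.evalAt_one_mul {n a : ℕ} (I : Finset (Fin n)) (h : I.card = a)
    (P : MvPolynomial (Fin a) ℤ) :
    ZS.evalAt I h ((∑ i, X i) * P) = (∑ i ∈ I, X i) * ZS.evalAt I h P := by
  rw [ZS.evalAt, ZS.evalAt, map_mul, map_sum]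
  congr 1
  simp only [aeval_X]
  rw [← Finset.sum_coe_sort I (fun i => (X i : MvPolynomial (Fin n) ℤ))]
  exact Equiv.sum_comp (I.orderIsoOfFin h).toEquiv
    (fun x : {x // x ∈ I} => (X (x : Fin n) : MvPolynomial (Fin n) ℤ))


set_option synthInstance.maxHeartbeats 1000000 in
set_option maxHeartbeats 1000000 in
/-- Let `∂` be the derivation with `∂(x) = x²` on each variable, acting on
`ℤ[y_1,…,y_a]`, on `ℤ[z_1,…,z_b]` and on the fraction field of `ℤ[x_1,…,x_{a+b}]`. Then for
symmetric `P`, `Q`,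
`∂(Z(P,Q)) = Z(∂P,Q) + Z(P,∂Q) - b·Z(e₁⁽ᵃ⁾·P, Q) - a·Z(P, e₁⁽ᵇ⁾·Q)`. -/
theorem derivation_ZS (a b : ℕ) (ha : 1 ≤ a) (hb : 1 ≤ b)
    (Da : Derivation ℤ (MvPolynomial (Fin a) ℤ) (MvPolynomial (Fin a) ℤ))
    (hDa : ∀ i, Da (X i) = X i ^ 2)
    (Db : Derivation ℤ (MvPolynomial (Fin b) ℤ) (MvPolynomial (Fin b) ℤ))
    (hDb : ∀ i, Db (X i) = X i ^ 2)
    (D : Derivation ℤ (FractionRing (MvPolynomial (Fin (a + b)) ℤ))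
          (FractionRing (MvPolynomial (Fin (a + b)) ℤ)))
    (hD : ∀ i : Fin (a + b),
      D (algebraMap (MvPolynomial (Fin (a + b)) ℤ)
            (FractionRing (MvPolynomial (Fin (a + b)) ℤ)) (X i)) =
        algebraMap (MvPolynomial (Fin (a + b)) ℤ)
            (FractionRing (MvPolynomial (Fin (a + b)) ℤ)) (X i ^ 2))
    (P : MvPolynomial (Fin a) ℤ) (hP : P.IsSymmetric)
    (Q : MvPolynomial (Fin b) ℤ) (hQ : Q.IsSymmetric) :
    D (ZS a b P Q) =
      ZS a b (Da P) Q + ZS a b P (Db Q)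
        - b • ZS a b ((∑ i, X i) * P) Q - a • ZS a b P ((∑ i, X i) * Q) := by
  classical
  set φ := algebraMap (MvPolynomial (Fin (a + b)) ℤ)
    (FractionRing (MvPolynomial (Fin (a + b)) ℤ)) with hφ
  unfold ZS
  rw [map_sum, nsmul_eq_mul, nsmul_eq_mul, Finset.mul_sum, Finset.mul_sum,
    ← Finset.sum_add_distrib, ← Finset.sum_sub_distrib, ← Finset.sum_sub_distrib]
  refine Finset.sum_congr rfl fun I _ => ?_
  have hcI : I.1.card = a := ZS.card_eq I
  have hcJ : I.1ᶜ.card = b := ZS.card_compl_eq I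
  -- the derivative of evaluated polynomials
  have hDeval : ∀ {c : ℕ} (J : Finset (Fin (a + b))) (hc : J.card = c)
      (Dc : Derivation ℤ (MvPolynomial (Fin c) ℤ) (MvPolynomial (Fin c) ℤ))
      (hDc : ∀ t, Dc (X t) = X t ^ 2) (R : MvPolynomial (Fin c) ℤ),
      D (φ (ZS.evalAt J hc R)) = φ (ZS.evalAt J hc (Dc R)) := by
    intro c J hc Dc hDc R
    have := aux_D_aeval D Dc
      ((IsScalarTower.toAlgHom ℤ (MvPolynomial (Fin (a + b)) ℤ)
          (FractionRing (MvPolynomial (Fin (a + b)) ℤ))).comp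
        (aeval (fun t : Fin c => X ((J.orderIsoOfFin hc t : {x // x ∈ J}) : Fin (a + b)))))
      (fun t => by
        simp only [AlgHom.coe_comp, Function.comp_apply, aeval_X, IsScalarTower.coe_toAlgHom',
          hDc, map_pow]
        rw [← map_pow, hD]) R
    simpa [ZS.evalAt] using this
  have hp := hDeval I.1 hcI Da hDa P
  have hq := hDeval I.1ᶜ hcJ Db hDb Q
  -- the derivative of the denominator
  have hd : D (∏ j ∈ I.1ᶜ, ∏ i ∈ I.1, φ (X j - X i)) =
      (∏ j ∈ I.1ᶜ, ∏ i ∈ I.1, φ (X j - X i)) *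
        ((a : FractionRing (MvPolynomial (Fin (a + b)) ℤ)) * φ (∑ j ∈ I.1ᶜ, X j) +
          (b : FractionRing (MvPolynomial (Fin (a + b)) ℤ)) * φ (∑ i ∈ I.1, X i)) := by
    have h1 : D (∏ j ∈ I.1ᶜ, ∏ i ∈ I.1, φ (X j - X i)) =
        (∏ j ∈ I.1ᶜ, ∏ i ∈ I.1, φ (X j - X i)) *
          ∑ j ∈ I.1ᶜ, ∑ i ∈ I.1, (φ (X j) + φ (X i)) := by
      refine aux_D_prod D _ _ _ (fun j hj => ?_)
      refine aux_D_prod D _ _ _ (fun i hi => ?_)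
      have hj2 := hD j
      have hi2 := hD i
      rw [map_sub, D.map_sub, hj2, hi2]
      simp only [← map_sub, ← map_add, ← map_mul]
      congr 1
      ring
    rw [h1]
    congr 1
    have e1 : ∀ j : Fin (a + b), ∑ i ∈ I.1, (φ (X j) + φ (X i)) =
        (a : FractionRing (MvPolynomial (Fin (a + b)) ℤ)) * φ (X j) + φ (∑ i ∈ I.1, X i) := by
      intro j
      rw [Finset.sum_add_distrib, Finset.sum_const, hcI, map_sum, nsmul_eq_mul]
    simp only [e1]
    rw [Finset.sum_add_distrib, Finset.sum_const, hcJ, ← Finset.mul_sum, ← map_sum,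
      nsmul_eq_mul]
  -- the denominator is nonzero
  have hd0 : (∏ j ∈ I.1ᶜ, ∏ i ∈ I.1, φ (X j - X i)) ≠ 0 := by
    rw [Finset.prod_ne_zero_iff]
    intro j hj
    rw [Finset.prod_ne_zero_iff]
    intro i hi
    have hji : j ≠ i := fun h => (Finset.mem_compl.mp hj) (h ▸ hi)
    have hne : (X j - X i : MvPolynomial (Fin (a + b)) ℤ) ≠ 0 := by
      rw [sub_ne_zero]
      exact fun h => hji (MvPolynomial.X_injective h)
    intro hcontra
    exact hne (IsFractionRing.injective (MvPolynomial (Fin (a + b)) ℤ)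
      (FractionRing (MvPolynomial (Fin (a + b)) ℤ)) (by rw [hcontra, map_zero]))
  rw [ZS.evalAt_one_mul, ZS.evalAt_one_mul, map_mul, map_mul]
  exact aux_term D _ _ _ _ _ (φ (∑ i ∈ I.1, X i)) (φ (∑ j ∈ I.1ᶜ, X j)) a b hp hq hd hd0
end

section
/- Let n ≥ 1 and let K be a field in which j! is invertible for every j ≤ n (for example a field of characteristic 0, or of characteristic p > n). Then the quotient algebra K[t_1,…,t_n] / ( t_1·t_i − (i+1)·t_{i+1} for 1 ≤ i ≤ n−1, t_1·t_n ) is isomorphic as a K-algebra to the truncated polynomial algebra K[u]/(u^{n+1}), via an isomorphism sending the class of t_1 to the class of u (and the class of t_j to u^j/j!). -/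
/-!
The relations say `t₁ tᵢ = (i+1) tᵢ₊₁`, so by induction `t₁ʲ = j! tⱼ` in the quotient; in
particular `t₁ⁿ⁺¹ = n! t₁ tₙ = 0`, and `u ↦ t₁` defines a map out of `K[u]/(uⁿ⁺¹)` over any
commutative ring. When the factorials are invertible, `tⱼ ↦ uʲ/j!` respects the relations, and
the two maps are mutually inverse because they are on the generators.
-/

open MvPolynomial
open scoped Nat

namespace UnknotQuotient

section CommRing

variable (R : Type*) [CommRing R] (m : ℕ)

/-- `X j` stands for `t_{j+1}`. -/
noncomputable def relations : Ideal (MvPolynomial (Fin (m + 1)) R) :=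
  Ideal.span (Set.range (fun i : Fin m =>
      (X (0 : Fin (m + 1)) * X i.castSucc - ((i : ℕ) + 2) • X i.succ :
        MvPolynomial (Fin (m + 1)) R)) ∪
    {X (0 : Fin (m + 1)) * X (Fin.last m)})

variable {R m}

theorem mk_X_zero_mul_X_castSucc (i : Fin m) :
    Ideal.Quotient.mk (relations R m) (X 0 * X i.castSucc) =
      ((i : ℕ) + 2) • Ideal.Quotient.mk (relations R m) (X i.succ) := by
  rw [← map_nsmul, Ideal.Quotient.eq]
  exact Ideal.subset_span (Or.inl ⟨i, rfl⟩)

theorem mk_X_zero_mul_X_last :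
    Ideal.Quotient.mk (relations R m) (X 0 * X (Fin.last m)) = 0 :=
  Ideal.Quotient.eq_zero_iff_mem.mpr (Ideal.subset_span (Or.inr rfl))

theorem mk_X_zero_pow_succ (j : Fin (m + 1)) :
    Ideal.Quotient.mk (relations R m) (X 0 ^ ((j : ℕ) + 1)) =
      ((j : ℕ) + 1)! • Ideal.Quotient.mk (relations R m) (X j) := by
  induction j using Fin.induction with
  | zero => simp
  | succ i ih =>
    rw [Fin.val_succ, pow_succ', map_mul, ← Fin.val_castSucc, ih, mul_smul_comm, ← map_mul,
      mk_X_zero_mul_X_castSucc, smul_smul, Fin.val_castSucc, Nat.factorial_succ (i + 1), mul_comm]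

theorem mk_X_zero_pow_eq_zero : Ideal.Quotient.mk (relations R m) (X 0 ^ (m + 2)) = 0 := by
  have h := mk_X_zero_pow_succ (R := R) (Fin.last m)
  rw [Fin.val_last] at h
  rw [pow_succ', map_mul, h, mul_smul_comm, ← map_mul, mk_X_zero_mul_X_last, smul_zero]

variable (R m) in
noncomputable def ofTruncated :
    Polynomial R ⧸ Ideal.span {(Polynomial.X : Polynomial R) ^ (m + 2)} →ₐ[R]
      MvPolynomial (Fin (m + 1)) R ⧸ relations R m :=
  Ideal.Quotient.liftₐ _ (Polynomial.aeval (Ideal.Quotient.mk _ (X 0))) fun p hp => by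
    obtain ⟨q, rfl⟩ := Ideal.mem_span_singleton.mp hp
    rw [map_mul, map_pow, Polynomial.aeval_X, ← map_pow, mk_X_zero_pow_eq_zero, zero_mul]

theorem ofTruncated_mk (p : Polynomial R) :
    ofTruncated R m (Ideal.Quotient.mk _ p) = Polynomial.aeval (Ideal.Quotient.mk _ (X 0)) p :=
  rfl

end CommRing

section Field

variable {K : Type*} [Field K] {m : ℕ}

theorem inv_factorial_eq_succ_mul_inv_factorial_succ {n : ℕ} (h : ((n + 1)! : K) ≠ 0) :
    (n ! : K)⁻¹ = ((n + 1 : ℕ) : K) * ((n + 1)! : K)⁻¹ := by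
  rw [Nat.factorial_succ, Nat.cast_mul] at h ⊢
  rw [mul_inv, ← mul_assoc, mul_inv_cancel₀ (left_ne_zero_of_mul h), one_mul]

theorem relations_le_ker (hfac : ∀ j ≤ m + 1, (j ! : K) ≠ 0) :
    relations K m ≤ RingHom.ker (aeval fun j : Fin (m + 1) =>
      Ideal.Quotient.mk (Ideal.span {(Polynomial.X : Polynomial K) ^ (m + 2)})
        (Polynomial.C (((j : ℕ) + 1)! : K)⁻¹ * Polynomial.X ^ ((j : ℕ) + 1))) := by
  rw [relations, Ideal.span_le]
  rintro _ (⟨i, rfl⟩ | rfl)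
  · have hcoef := inv_factorial_eq_succ_mul_inv_factorial_succ (hfac ((i : ℕ) + 2) (by omega))
    have hpoly : (Polynomial.X * (Polynomial.C (((i : ℕ) + 1)! : K)⁻¹ *
        Polynomial.X ^ ((i : ℕ) + 1)) : Polynomial K) =
        ((i : ℕ) + 2) • (Polynomial.C (((i : ℕ) + 2)! : K)⁻¹ * Polynomial.X ^ ((i : ℕ) + 2)) := by
      rw [hcoef, map_mul, map_natCast, nsmul_eq_mul]
      ring
    rw [SetLike.mem_coe, RingHom.mem_ker, map_sub, map_mul, map_nsmul, aeval_X, aeval_X, aeval_X,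
      ← map_mul, ← map_nsmul, ← map_sub, Fin.val_castSucc, Fin.val_succ, Fin.val_zero]
    simp [hpoly]
  · rw [SetLike.mem_coe, RingHom.mem_ker, map_mul, aeval_X, aeval_X, ← map_mul,
      Ideal.Quotient.eq_zero_iff_mem, Ideal.mem_span_singleton, Fin.val_zero, Fin.val_last]
    exact ⟨Polynomial.C ((0 + 1)! : K)⁻¹ * Polynomial.C ((m + 1)! : K)⁻¹, by ring⟩

noncomputable def toTruncated (hfac : ∀ j ≤ m + 1, (j ! : K) ≠ 0) :
    MvPolynomial (Fin (m + 1)) K ⧸ relations K m →ₐ[K]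
      Polynomial K ⧸ Ideal.span {(Polynomial.X : Polynomial K) ^ (m + 2)} :=
  Ideal.Quotient.liftₐ _ _ fun _ ha => RingHom.mem_ker.mp (relations_le_ker hfac ha)

variable (hfac : ∀ j ≤ m + 1, (j ! : K) ≠ 0)

theorem toTruncated_mk_X (j : Fin (m + 1)) :
    toTruncated hfac (Ideal.Quotient.mk _ (X j)) =
      Ideal.Quotient.mk _
        (Polynomial.C (((j : ℕ) + 1)! : K)⁻¹ * Polynomial.X ^ ((j : ℕ) + 1)) :=
  aeval_X _ j

theorem toTruncated_mk_X_zero :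
    toTruncated hfac (Ideal.Quotient.mk _ (X 0)) = Ideal.Quotient.mk _ Polynomial.X := by
  simp [toTruncated_mk_X]

theorem toTruncated_comp_ofTruncated : (toTruncated hfac).comp (ofTruncated K m) = AlgHom.id _ _ :=
  Ideal.Quotient.algHom_ext K <| Polynomial.algHom_ext <| by
    simp [ofTruncated_mk, toTruncated_mk_X_zero]

theorem ofTruncated_comp_toTruncated : (ofTruncated K m).comp (toTruncated hfac) = AlgHom.id _ _ :=
  Ideal.Quotient.algHom_ext K <| MvPolynomial.algHom_ext fun j => by
    simp only [AlgHom.comp_apply, Ideal.Quotient.mkₐ_eq_mk, AlgHom.id_apply, toTruncated_mk_X,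
      ofTruncated_mk, map_mul, map_pow, Polynomial.aeval_C, Polynomial.aeval_X]
    rw [← map_pow, mk_X_zero_pow_succ, ← Algebra.smul_def, ← Nat.cast_smul_eq_nsmul K, smul_smul,
      inv_mul_cancel₀ (hfac _ j.isLt), one_smul]

end Field

end UnknotQuotient

open UnknotQuotient in
/-- Let `n = m+1 ≥ 1` and let `K` be a field in which `j!` is invertible for
all `j ≤ n`. Then `K[t_1,…,t_n]/(t₁t_i - (i+1)t_{i+1} (1 ≤ i ≤ n-1), t₁t_n)` is isomorphic as
a `K`-algebra to `K[u]/(u^{n+1})`, via an isomorphism sending the class of `t₁` to the class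
of `u` and the class of `t_j` to `u^j/j!`.  (Here `t_j` is the variable `X ⟨j-1⟩`.) -/
theorem unknot_quotient_invertible_factorials (m : ℕ) (K : Type*) [Field K]
    (hfac : ∀ j : ℕ, j ≤ m + 1 → IsUnit ((j.factorial : K))) :
    ∃ e : (MvPolynomial (Fin (m + 1)) K ⧸
            Ideal.span (Set.range (fun i : Fin m =>
                (X (0 : Fin (m + 1)) * X i.castSucc - ((i : ℕ) + 2) • X i.succ :
                  MvPolynomial (Fin (m + 1)) K)) ∪
              {X (0 : Fin (m + 1)) * X (Fin.last m)})) ≃ₐ[K]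
          (Polynomial K ⧸ Ideal.span {(Polynomial.X : Polynomial K) ^ (m + 2)}),
      e (Ideal.Quotient.mk _ (X (0 : Fin (m + 1)))) =
          Ideal.Quotient.mk _ (Polynomial.X : Polynomial K) ∧
      ∀ j : Fin (m + 1),
        e (Ideal.Quotient.mk _ (X j)) =
          Ideal.Quotient.mk _
            (Polynomial.C ((((j : ℕ) + 1).factorial : K))⁻¹ *
              (Polynomial.X : Polynomial K) ^ ((j : ℕ) + 1)) := by
  have hfac' : ∀ j ≤ m + 1, (j ! : K) ≠ 0 := fun j hj => (hfac j hj).ne_zero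
  exact ⟨AlgEquiv.ofAlgHom (toTruncated hfac') (ofTruncated K m)
      (toTruncated_comp_ofTruncated hfac') (ofTruncated_comp_toTruncated hfac'),
    toTruncated_mk_X_zero hfac', toTruncated_mk_X hfac'⟩
end

section
/- Consider the commutative ring R = ℤ[s,t]/(s² − 2t, s·t). Then: (a) for every j ≥ 2 the image of t^j in R satisfies 2·t^j = 0; and (b) as an abelian group, R is isomorphic to ℤ³ ⊕ (⊕_{j ≥ 2} ℤ/2ℤ), where the free part of rank 3 is spanned by the images of 1, s, t, and the j-th torsion summand is generated by the image of t^j for j ≥ 2. -/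
open MvPolynomial

/-- The ring `R = ℤ[s,t]/(s² - 2t, st)`, with `s = X 0` and `t = X 1`. -/
noncomputable abbrev CautisRing : Type :=
  MvPolynomial (Fin 2) ℤ ⧸
    Ideal.span {(X 0 ^ 2 - 2 * X 1 : MvPolynomial (Fin 2) ℤ), X 0 * X 1}

/-- The image of `s` in `R`. -/
noncomputable def CautisRing.s : CautisRing := Ideal.Quotient.mk _ (X 0)

/-- The image of `t` in `R`. -/
noncomputable def CautisRing.t : CautisRing := Ideal.Quotient.mk _ (X 1)

/-!
Modulo `s² = 2t` and `st = 0` (hence `s³ = 0` and `2t² = s·st - t(s² - 2t) = 0`) every monomial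
`s^a t^b` reduces to `0` or to one of `1, s, 2t, t, t^j` (`j ≥ 2`), so these elements span `R`.
They satisfy no relations besides `2t^j = 0`: sending each monomial of `ℤ[s,t]` to the coordinates
of its normal form defines an additive map that kills every multiple of both relations (a check
monomial by monomial), so it descends to an inverse on `R`.
-/

namespace MvPolynomial

theorem linearMap_mul_eq_zero_of_monomial_mul {σ R M : Type*} [CommRing R] [AddCommGroup M]
    [Module R M] (ψ : MvPolynomial σ R →ₗ[R] M) {g : MvPolynomial σ R}
    (h : ∀ d, ψ (monomial d 1 * g) = 0) (p : MvPolynomial σ R) : ψ (p * g) = 0 := by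
  induction p using MvPolynomial.induction_on' with
  | monomial d c =>
    have : monomial d c * g = c • (monomial d 1 * g) := by
      rw [← smul_mul_assoc, smul_monomial, smul_eq_mul, mul_one]
    rw [this, map_smul, h, smul_zero]
  | add p q hp hq => rw [add_mul, map_add, hp, hq, add_zero]

theorem monomial_eq_C_mul_X_zero_pow_mul_X_one_pow {R : Type*} [CommSemiring R]
    (d : Fin 2 →₀ ℕ) (c : R) : monomial d c = C c * (X 0 ^ d 0 * X 1 ^ d 1) := by
  rw [monomial_eq, Finsupp.prod_fintype _ _ (by simp), Fin.prod_univ_two]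

end MvPolynomial

open DirectSum

namespace CautisRing

theorem s_mul_t : s * t = 0 :=
  Ideal.Quotient.eq_zero_iff_mem.mpr (Ideal.subset_span (by simp))

theorem s_sq : s ^ 2 = 2 * t :=
  sub_eq_zero.mp <| Ideal.Quotient.eq_zero_iff_mem.mpr (Ideal.subset_span (by simp))

theorem two_mul_t_pow (j : ℕ) (hj : 2 ≤ j) : (2 : CautisRing) * t ^ j = 0 := by
  obtain ⟨k, rfl⟩ := Nat.exists_eq_add_of_le' hj
  linear_combination (t ^ k * s) * s_mul_t - t ^ (k + 1) * s_sq

theorem mk_monomial (d : Fin 2 →₀ ℕ) (c : ℤ) :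
    Ideal.Quotient.mk _ (monomial d c) = c • (s ^ d 0 * t ^ d 1) := by
  rw [monomial_eq_C_mul_X_zero_pow_mul_X_one_pow, ← smul_eq_C_mul, map_zsmul]
  rfl

abbrev Coords : Type := ℤ × ℤ × ℤ × (⨁ _ : ℕ, ZMod 2)

noncomputable def torsionHom (j : ℕ) : ZMod 2 →+ CautisRing :=
  ZMod.lift 2 ⟨zmultiplesHom _ (t ^ (j + 2)), by
    simpa [zmultiplesHom] using two_mul_t_pow (j + 2) le_add_self⟩

theorem torsionHom_one (j : ℕ) : torsionHom j 1 = t ^ (j + 2) := by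
  change ZMod.lift 2 _ ((1 : ℤ) : ZMod 2) = _
  rw [ZMod.lift_coe]
  simp

noncomputable def ofCoords : Coords →+ CautisRing :=
  (zmultiplesHom _ 1).coprod <| (zmultiplesHom _ s).coprod <|
    (zmultiplesHom _ t).coprod <| toAddMonoid torsionHom

theorem ofCoords_apply_of (j : ℕ) : ofCoords (0, 0, 0, of _ j 1) = t ^ (j + 2) := by
  simp [ofCoords, torsionHom_one]

noncomputable def monomialCoords : ℕ → ℕ → Coords
  | 0, 0 => (1, 0, 0, 0)
  | 1, 0 => (0, 1, 0, 0)
  | 2, 0 => (0, 0, 2, 0)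
  | 0, 1 => (0, 0, 1, 0)
  | 0, j + 2 => (0, 0, 0, of _ j 1)
  | _, _ => 0

theorem monomialCoords_succ_succ (a b : ℕ) : monomialCoords (a + 1) (b + 1) = 0 := by
  rcases a with _ | _ | a <;> rfl

theorem monomialCoords_add_two_left (a b : ℕ) :
    monomialCoords (a + 2) b = 2 • monomialCoords a (b + 1) := by
  match a, b with
  | 0, 0 => rfl
  | 0, j + 1 =>
    change 0 = ((0, 0, 0, 2 • of _ j 1) : Coords)
    rw [← map_nsmul, two_nsmul, show (1 + 1 : ZMod 2) = 0 from rfl, map_zero]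
    rfl
  | a + 1, b => rw [monomialCoords_succ_succ, smul_zero]; rfl

theorem ofCoords_monomialCoords (a b : ℕ) : ofCoords (monomialCoords a b) = s ^ a * t ^ b := by
  match a, b with
  | 0, 0 => simp [monomialCoords, ofCoords]
  | 1, 0 => simp [monomialCoords, ofCoords]
  | 2, 0 => simp [monomialCoords, ofCoords, s_sq]
  | 0, 1 => simp [monomialCoords, ofCoords]
  | 0, j + 2 => simpa [monomialCoords] using ofCoords_apply_of j
  | a + 3, 0 =>
    rw [show monomialCoords (a + 3) 0 = 0 from rfl, map_zero]
    linear_combination (-(s ^ a)) * (2 * s_mul_t + s * s_sq)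
  | a + 1, b + 1 =>
    rw [monomialCoords_succ_succ, map_zero]
    linear_combination (-(s ^ a * t ^ b)) * s_mul_t

noncomputable def polyCoords : MvPolynomial (Fin 2) ℤ →ₗ[ℤ] Coords :=
  (basisMonomials (Fin 2) ℤ).constr ℤ (M' := Coords) fun d => monomialCoords (d 0) (d 1)

theorem polyCoords_monomial (d : Fin 2 →₀ ℕ) (c : ℤ) :
    polyCoords (monomial d c) = c • monomialCoords (d 0) (d 1) := by
  have h : monomial d c = c • basisMonomials (Fin 2) ℤ d := by simp [smul_monomial]
  rw [h, map_smul, polyCoords, Module.Basis.constr_basis]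

theorem polyCoords_X_pow_mul_X_pow (a b : ℕ) :
    polyCoords (X 0 ^ a * X 1 ^ b) = monomialCoords a b := by
  have h := polyCoords_monomial (Finsupp.single 0 a + Finsupp.single 1 b) 1
  rw [monomial_eq_C_mul_X_zero_pow_mul_X_one_pow] at h
  simpa using h

theorem polyCoords_eq_zero_of_mem {p : MvPolynomial (Fin 2) ℤ}
    (hp : p ∈ Ideal.span {(X 0 ^ 2 - 2 * X 1 : MvPolynomial (Fin 2) ℤ), X 0 * X 1}) :
    polyCoords p = 0 := by
  obtain ⟨u, v, rfl⟩ := Ideal.mem_span_pair.mp hp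
  have h₁ : ∀ d, polyCoords (monomial d 1 * (X 0 ^ 2 - 2 * X 1)) = 0 := fun d => by
    have e : monomial d (1 : ℤ) * (X 0 ^ 2 - 2 * X 1) =
        X 0 ^ (d 0 + 2) * X 1 ^ d 1 - 2 • (X 0 ^ d 0 * X 1 ^ (d 1 + 1)) := by
      rw [monomial_eq_C_mul_X_zero_pow_mul_X_one_pow]; simp only [C_1]; ring
    rw [e, map_sub, map_nsmul, polyCoords_X_pow_mul_X_pow, polyCoords_X_pow_mul_X_pow,
      monomialCoords_add_two_left, sub_self]
  have h₂ : ∀ d, polyCoords (monomial d 1 * (X 0 * X 1)) = 0 := fun d => by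
    have e : monomial d (1 : ℤ) * (X 0 * X 1) = X 0 ^ (d 0 + 1) * X 1 ^ (d 1 + 1) := by
      rw [monomial_eq_C_mul_X_zero_pow_mul_X_one_pow]; simp only [C_1]; ring
    rw [e, polyCoords_X_pow_mul_X_pow, monomialCoords_succ_succ]
  rw [map_add, linearMap_mul_eq_zero_of_monomial_mul _ h₁,
    linearMap_mul_eq_zero_of_monomial_mul _ h₂, add_zero]

noncomputable def coords : CautisRing →+ Coords :=
  QuotientAddGroup.lift _ polyCoords.toAddMonoidHom fun _ => polyCoords_eq_zero_of_mem

theorem coords_mk (p : MvPolynomial (Fin 2) ℤ) : coords (Ideal.Quotient.mk _ p) = polyCoords p :=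
  rfl

theorem coords_s_pow_mul_t_pow (a b : ℕ) : coords (s ^ a * t ^ b) = monomialCoords a b := by
  rw [show s ^ a * t ^ b = Ideal.Quotient.mk _ (X 0 ^ a * X 1 ^ b) by simp [s, t], coords_mk,
    polyCoords_X_pow_mul_X_pow]

theorem ofCoords_coords (x : CautisRing) : ofCoords (coords x) = x := by
  obtain ⟨p, rfl⟩ := Ideal.Quotient.mk_surjective x
  induction p using MvPolynomial.induction_on' with
  | monomial d c =>
    rw [coords_mk, polyCoords_monomial, map_zsmul, ofCoords_monomialCoords, mk_monomial]
  | add p q hp hq => rw [map_add, map_add, map_add, hp, hq]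

theorem coords_toAddMonoid_torsionHom (f : ⨁ _ : ℕ, ZMod 2) :
    coords (toAddMonoid torsionHom f) = (0, 0, 0, f) := by
  induction f using DirectSum.induction_on with
  | zero => rw [map_zero, map_zero]; rfl
  | of j y =>
    obtain rfl | rfl : y = 0 ∨ y = 1 := by revert y; decide
    · rw [map_zero, map_zero, map_zero]; rfl
    · simpa [torsionHom_one, monomialCoords] using coords_s_pow_mul_t_pow 0 (j + 2)
  | add f g hf hg => simp [hf, hg]

theorem coords_ofCoords (x : Coords) : coords (ofCoords x) = x := by
  obtain ⟨a, b, c, f⟩ := x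
  have h₁ : coords 1 = (1, 0, 0, 0) := by
    simpa [monomialCoords] using coords_s_pow_mul_t_pow 0 0
  have hs : coords s = (0, 1, 0, 0) := by
    simpa [monomialCoords] using coords_s_pow_mul_t_pow 1 0
  have ht : coords t = (0, 0, 1, 0) := by
    simpa [monomialCoords] using coords_s_pow_mul_t_pow 0 1
  simp only [ofCoords, AddMonoidHom.coprod_apply, zmultiplesHom_apply, map_add, map_zsmul, h₁, hs,
    ht, coords_toAddMonoid_torsionHom]
  simp

noncomputable def coordsEquiv : Coords ≃+ CautisRing :=
  AddMonoidHom.toAddEquiv ofCoords coords (AddMonoidHom.ext coords_ofCoords)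
    (AddMonoidHom.ext ofCoords_coords)

end CautisRing

/-- In `R = ℤ[s,t]/(s² - 2t, st)`: (a) `2·t^j = 0` for all `j ≥ 2`; and
(b) as an abelian group `R ≅ ℤ³ ⊕ ⊕_{j≥2} ℤ/2ℤ`, where the free part is spanned by the
images of `1, s, t` and the `j`-th torsion summand is generated by the image of `t^j`
(indexed below by `j = j'+2` for `j' : ℕ`). -/
theorem cautisRing_structure :
    (∀ j : ℕ, 2 ≤ j → (2 : CautisRing) * CautisRing.t ^ j = 0) ∧
    ∃ e : (ℤ × ℤ × ℤ × (DirectSum ℕ (fun _ => ZMod 2))) ≃+ CautisRing,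
      e (1, 0, 0, 0) = 1 ∧
      e (0, 1, 0, 0) = CautisRing.s ∧
      e (0, 0, 1, 0) = CautisRing.t ∧
      ∀ j' : ℕ, e (0, 0, 0, DirectSum.of (fun _ => ZMod 2) j' 1) =
        CautisRing.t ^ (j' + 2) := by
  open CautisRing in
  refine ⟨two_mul_t_pow, coordsEquiv, ?_, ?_, ?_, ofCoords_apply_of⟩ <;>
    simp [coordsEquiv, ofCoords]
end

section
/- Let p be a prime and k a field of characteristic p. Let V = k^{p−1} and let N be a nilpotent endomorphism of V that is a single Jordan block of size p−1 (i.e. N^{p−1} = 0 and N^{p−2} ≠ 0). Consider the endomorphism D = N ⊗ 1 + 1 ⊗ N of V ⊗_k V. Then D^p = 0, and V ⊗_k V, regarded as a module over k[X] via X ↦ D, decomposes as a direct sum of one copy of the trivial module k (on which D acts by zero) and p−2 copies of k[X]/(X^p); equivalently, D is conjugate to a nilpotent matrix in Jordan form consisting of p−2 Jordan blocks of size p and one Jordan block of size 1. -/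
/-!
In the basis `Nᵃv ⊗ Nᵇv` of `V ⊗ V` the operator `D` acts like multiplication by `x + y` on
`k[x, y]/(xᵖ⁻¹, yᵖ⁻¹)`. In characteristic `p` one has `Dᵖ = Nᵖ ⊗ 1 + 1 ⊗ Nᵖ = 0`, so each
`v ⊗ Nᵇv` with `b < p - 2` tops a Jordan chain of length `p`. The vector
`u = ∑_{m < p-1} Dᵐ (v ⊗ Nᵖ⁻²⁻ᵐ v)` satisfies `Du = Nᵖ⁻¹v ⊗ v - v ⊗ Nᵖ⁻¹v = 0`, by the
hockey-stick identity and `p ∣ (p choose j)` for `0 < j < p`, and it supplies the missing vector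
`v ⊗ Nᵖ⁻²v` modulo the chains. From all the `v ⊗ Nᵇv`, the relation
`Nx ⊗ y = D(x ⊗ y) - x ⊗ Ny` reaches every `Nᵃv ⊗ Nᵇv`, so `u` and the chains span `V ⊗ V`;
as `1 + (p - 2)p = (p - 1)²`, they form a basis.
-/

open TensorProduct Finset

theorem Nat.sum_range_choose_eq_choose_add_one (n j : ℕ) :
    ∑ m ∈ range n, m.choose j = n.choose (j + 1) := by
  induction n with
  | zero => simp
  | succ n ih => rw [sum_range_succ, ih, Nat.choose_succ_succ', add_comm]

section TensorSquareAction

variable {R M : Type*} [CommRing R] [AddCommGroup M] [Module R M]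

def tensorSquareAction (N : Module.End R M) : Module.End R (M ⊗[R] M) :=
  N.rTensor M + N.lTensor M

theorem LinearMap.commute_rTensor_lTensor (N : Module.End R M) :
    Commute (N.rTensor M) (N.lTensor M) :=
  (LinearMap.rTensor_comp_lTensor _ _ _).trans (LinearMap.lTensor_comp_rTensor _ _ _).symm

theorem tensorSquareAction_pow_tmul (N : Module.End R M) (t : ℕ) (x y : M) :
    (tensorSquareAction N ^ t) (x ⊗ₜ y) =
      ∑ i ∈ range (t + 1), (t.choose i : R) • ((N ^ i) x ⊗ₜ (N ^ (t - i)) y) := by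
  rw [tensorSquareAction, (LinearMap.commute_rTensor_lTensor N).add_pow, LinearMap.sum_apply]
  refine sum_congr rfl fun i _ => ?_
  rw [Module.End.mul_apply, Module.End.mul_apply, Module.End.natCast_apply,
    ← Nat.cast_smul_eq_nsmul R, LinearMap.rTensor_pow, LinearMap.lTensor_pow, map_smul, map_smul,
    LinearMap.lTensor_tmul, LinearMap.rTensor_tmul]

theorem tensorSquareAction_pow_char (N : Module.End R M) {p : ℕ} (hp : p.Prime) [CharP R p] :
    tensorSquareAction N ^ p = tensorSquareAction (N ^ p) := by
  refine TensorProduct.ext' fun x y => ?_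
  have hmid : ∀ i ∈ range (p - 1), (p.choose (i + 1) : R) = 0 := fun i hi =>
    (CharP.cast_eq_zero_iff R p _).2 <| hp.dvd_choose_self (by omega) (by simp at hi; omega)
  obtain ⟨m, rfl⟩ : ∃ m, p = m + 1 := ⟨p - 1, by have := hp.pos; omega⟩
  rw [tensorSquareAction_pow_tmul, sum_range_succ, sum_range_succ', sum_eq_zero fun i hi => by
    rw [hmid i hi, zero_smul]]
  simp [tensorSquareAction, add_comm]

theorem sum_range_tensorSquareAction_pow_tmul (N : Module.End R M) (n : ℕ) (x y : M) :
    ∑ m ∈ range n, (tensorSquareAction N ^ m) (x ⊗ₜ (N ^ (n - 1 - m)) y) =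
      ∑ j ∈ range n, (n.choose (j + 1) : R) • ((N ^ j) x ⊗ₜ (N ^ (n - 1 - j)) y) := by
  calc _ = ∑ m ∈ range n, ∑ j ∈ range n,
        (m.choose j : R) • ((N ^ j) x ⊗ₜ (N ^ (n - 1 - j)) y) := by
        refine sum_congr rfl fun m hm => ?_
        rw [mem_range] at hm
        rw [tensorSquareAction_pow_tmul]
        refine sum_subset_zero_on_sdiff (range_subset_range.2 (by omega)) (fun j hj => ?_)
          (fun j hj => ?_)
        · rw [mem_sdiff, mem_range, mem_range] at hj
          rw [Nat.choose_eq_zero_of_lt (by omega), Nat.cast_zero, zero_smul]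
        · rw [mem_range] at hj
          rw [← Module.End.mul_apply, ← pow_add, show m - j + (n - 1 - m) = n - 1 - j by omega]
    _ = _ := by
        rw [sum_comm]
        simp_rw [← sum_smul, ← Nat.cast_sum, Nat.sum_range_choose_eq_choose_add_one]

def invariantTensor (N : Module.End R M) (p : ℕ) (x y : M) : M ⊗[R] M :=
  ∑ m ∈ range (p - 1), (tensorSquareAction N ^ m) (x ⊗ₜ (N ^ (p - 2 - m)) y)

theorem tensorSquareAction_invariantTensor (N : Module.End R M) {p : ℕ} (hp : p.Prime)
    [CharP R p] (x y : M) :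
    tensorSquareAction N (invariantTensor N p x y) =
      (N ^ (p - 1)) x ⊗ₜ y - x ⊗ₜ (N ^ (p - 1)) y := by
  obtain ⟨n, rfl⟩ : ∃ n, p = n + 1 := ⟨p - 1, by have := hp.pos; omega⟩
  have hL : ∑ m ∈ range (n + 1), (tensorSquareAction N ^ m) (x ⊗ₜ (N ^ (n + 1 - 1 - m)) y) =
      tensorSquareAction N (invariantTensor N (n + 1) x y) + x ⊗ₜ (N ^ n) y := by
    rw [sum_range_succ', invariantTensor, map_sum]
    refine congrArg₂ _ (sum_congr rfl fun m hm => ?_) (by simp)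
    rw [← Module.End.mul_apply, ← pow_succ', show n + 1 - 1 - (m + 1) = n + 1 - 2 - m by omega]
  have hR : ∑ j ∈ range (n + 1),
      ((n + 1).choose (j + 1) : R) • ((N ^ j) x ⊗ₜ[R] (N ^ (n + 1 - 1 - j)) y) =
        (N ^ n) x ⊗ₜ y := by
    rw [sum_range_succ, sum_eq_zero fun j hj => by
      rw [(CharP.cast_eq_zero_iff R _ _).2 (hp.dvd_choose_self (by omega) (by simp at hj; omega)),
        zero_smul]]
    simp
  rw [add_tsub_cancel_right, eq_sub_iff_add_eq, ← hL, sum_range_tensorSquareAction_pow_tmul, hR]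

theorem Submodule.eq_top_of_tmul_pow_apply_mem {N : Module.End R M} {v : M}
    (hv : Submodule.span R (Set.range fun d : ℕ => (N ^ d) v) = ⊤) {S : Submodule R (M ⊗[R] M)}
    (hS : ∀ x ∈ S, tensorSquareAction N x ∈ S) (hvS : ∀ d : ℕ, v ⊗ₜ (N ^ d) v ∈ S) : S = ⊤ := by
  let P : Submodule R M := ⨅ y, S.comap ((TensorProduct.mk R M M).flip y)
  have mem_P {x : M} : x ∈ P ↔ ∀ y, x ⊗ₜ y ∈ S := by simp [P]
  have hvP : v ∈ P := by
    refine mem_P.2 fun y => ?_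
    have : Submodule.span R (Set.range fun d : ℕ => (N ^ d) v) ≤
        S.comap (TensorProduct.mk R M M v) :=
      Submodule.span_le.2 <| Set.range_subset_iff.2 hvS
    exact this (hv ▸ Submodule.mem_top)
  have hNP : ∀ x ∈ P, N x ∈ P := fun x hx => mem_P.2 fun y => by
    have : N x ⊗ₜ y = tensorSquareAction N (x ⊗ₜ y) - x ⊗ₜ N y := by
      simp [tensorSquareAction]
    rw [this]
    exact S.sub_mem (hS _ (mem_P.1 hx y)) (mem_P.1 hx (N y))
  have hPtop : P = ⊤ := by
    refine top_le_iff.1 (hv ▸ Submodule.span_le.2 (Set.range_subset_iff.2 fun d => ?_))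
    induction d with
    | zero => exact hvP
    | succ d ih => rw [pow_succ', Module.End.mul_apply]; exact hNP _ ih
  rw [eq_top_iff, ← TensorProduct.span_tmul_eq_top, Submodule.span_le]
  rintro _ ⟨x, y, rfl⟩
  exact mem_P.1 (hPtop ▸ Submodule.mem_top) y

theorem Fin.sum_smul_eq_sum_shift_smul {p : ℕ} (f : Fin p → R) (w : ℕ → M) (hw : w 0 = 0) :
    ∑ i, f i • w i =
      ∑ i : Fin p, (if h : (i : ℕ) + 1 < p then f ⟨i + 1, h⟩ else 0) • w (i + 1) := by
  cases p with
  | zero => simp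
  | succ p =>
    rw [Fin.sum_univ_succ, Fin.sum_univ_castSucc]
    simp [hw, Fin.succ]

def jordanModelMap (N : Module.End R M) (p : ℕ) (v : M) :
    R × (Fin (p - 2) → Fin p → R) →ₗ[R] M ⊗[R] M :=
  (LinearMap.toSpanSingleton R _ (invariantTensor N p v v)).coprod <|
    ∑ b : Fin (p - 2), Fintype.linearCombination R
      (fun i : Fin p => (tensorSquareAction N ^ (p - 1 - i)) (v ⊗ₜ (N ^ (b : ℕ)) v)) ∘ₗ
        LinearMap.proj b

theorem jordanModelMap_apply (N : Module.End R M) (p : ℕ) (v : M)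
    (z : R × (Fin (p - 2) → Fin p → R)) :
    jordanModelMap N p v z = z.1 • invariantTensor N p v v +
      ∑ b, ∑ i, z.2 b i • (tensorSquareAction N ^ (p - 1 - i)) (v ⊗ₜ (N ^ (b : ℕ)) v) := by
  simp [jordanModelMap, Fintype.linearCombination_apply]

theorem tensorSquareAction_jordanModelMap {N : Module.End R M} {p : ℕ} (hp : p.Prime) [CharP R p]
    {v : M} (hv : (N ^ (p - 1)) v = 0) (z : R × (Fin (p - 2) → Fin p → R)) :
    tensorSquareAction N (jordanModelMap N p v z) = jordanModelMap N p v
      (0, fun b i => if h : (i : ℕ) + 1 < p then z.2 b ⟨i + 1, h⟩ else 0) := by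
  simp only [jordanModelMap_apply, map_add, map_smul, map_sum,
    tensorSquareAction_invariantTensor N hp, hv, tmul_zero, zero_tmul, sub_zero, smul_zero,
    zero_smul, zero_add]
  refine sum_congr rfl fun b _ => ?_
  have hNp : (N ^ p) v = 0 := by
    rw [show p = 1 + (p - 1) by have := hp.pos; omega, pow_add, Module.End.mul_apply, hv, map_zero]
  let w : ℕ → M ⊗[R] M := fun j => (tensorSquareAction N ^ (p - j)) (v ⊗ₜ (N ^ (b : ℕ)) v)
  have hw : w 0 = 0 := by
    simp only [w, Nat.sub_zero]
    rw [tensorSquareAction_pow_char N hp, tensorSquareAction, LinearMap.add_apply,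
      LinearMap.rTensor_tmul, LinearMap.lTensor_tmul, hNp, zero_tmul, zero_add,
      ← Module.End.mul_apply, (Commute.pow_pow_self N p b).eq, Module.End.mul_apply, hNp, map_zero,
      tmul_zero]
  calc _ = ∑ i : Fin p, z.2 b i • w i := sum_congr rfl fun i _ => by
        rw [← Module.End.mul_apply, ← pow_succ', show p - 1 - i + 1 = p - i by omega]
    _ = _ := by
        rw [Fin.sum_smul_eq_sum_shift_smul _ w hw]
        exact sum_congr rfl fun i _ => by simp only [w, show p - (i + 1) = p - 1 - i by omega]

theorem jordanModelMap_surjective {N : Module.End R M} {p : ℕ} (hp : p.Prime) [CharP R p] {v : M}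
    (hv0 : (N ^ (p - 1)) v = 0) (hv : Submodule.span R (Set.range fun d : ℕ => (N ^ d) v) = ⊤) :
    Function.Surjective (jordanModelMap N p v) := by
  have hp2 := hp.two_le
  set S := LinearMap.range (jordanModelMap N p v)
  have hS : ∀ x ∈ S, tensorSquareAction N x ∈ S := by
    rintro _ ⟨z, rfl⟩
    exact ⟨_, (tensorSquareAction_jordanModelMap hp hv0 z).symm⟩
  have hS_pow : ∀ t, ∀ x ∈ S, (tensorSquareAction N ^ t) x ∈ S := by
    intro t
    induction t with
    | zero => exact fun x hx => hx
    | succ t ih => exact fun x hx => by rw [pow_succ', Module.End.mul_apply]; exact hS _ (ih x hx)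
  have h_top : ∀ b < p - 2, v ⊗ₜ (N ^ b) v ∈ S := fun b hb =>
    ⟨(0, Pi.single ⟨b, hb⟩ (Pi.single ⟨p - 1, by omega⟩ 1)), by
      simp [jordanModelMap_apply, Pi.single_apply, ite_apply, ite_smul]⟩
  have h_last : v ⊗ₜ (N ^ (p - 2)) v ∈ S := by
    have h_inv : invariantTensor N p v v ∈ S := ⟨(1, 0), by simp [jordanModelMap_apply]⟩
    rw [invariantTensor, show p - 1 = p - 2 + 1 by omega, sum_range_succ'] at h_inv
    have h_rest := S.sum_mem fun m (hm : m ∈ range (p - 2)) =>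
      hS_pow (m + 1) _ (h_top (p - 2 - (m + 1)) (by rw [mem_range] at hm; omega))
    simpa using S.sub_mem h_inv h_rest
  rw [← LinearMap.range_eq_top]
  refine Submodule.eq_top_of_tmul_pow_apply_mem hv hS fun d => ?_
  rcases lt_trichotomy d (p - 2) with hd | rfl | hd
  · exact h_top d hd
  · exact h_last
  · rw [show d = d - (p - 1) + (p - 1) by omega, pow_add, Module.End.mul_apply, hv0, map_zero,
      tmul_zero]
    exact S.zero_mem

end TensorSquareAction

section CyclicVector

variable {K V : Type*} [Field K] [AddCommGroup V] [Module K V]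

theorem linearIndependent_pow_apply {N : Module.End K V} {n : ℕ} {v : V}
    (hN : (N ^ (n + 1)) v = 0) (hv : (N ^ n) v ≠ 0) :
    LinearIndependent K fun i : Fin (n + 1) => (N ^ (i : ℕ)) v := by
  induction n generalizing v with
  | zero => exact (linearIndependent_unique_iff (ι := Fin 1)).2 (by simpa using hv)
  | succ n ih =>
    rw [linearIndependent_finSucc]
    refine ⟨?_, fun hmem => hv ?_⟩
    · convert ih (v := N v) (by rwa [← Module.End.mul_apply, ← pow_succ])
        (by rwa [← Module.End.mul_apply, ← pow_succ]) using 2 with i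
      simp [Fin.tail, pow_succ]
    · have h_ker :
          Submodule.span K (Set.range (Fin.tail fun i : Fin (n + 2) => (N ^ (i : ℕ)) v)) ≤
            LinearMap.ker (N ^ (n + 1)) := by
        refine Submodule.span_le.2 (Set.range_subset_iff.2 fun i => ?_)
        rw [SetLike.mem_coe, LinearMap.mem_ker, Fin.tail, Fin.val_succ, ← Module.End.mul_apply,
          ← pow_add, show n + 1 + (i + 1) = i + (n + 1 + 1) by omega, pow_add, Module.End.mul_apply,
          hN, map_zero]
      simpa using h_ker hmem

theorem span_range_pow_apply_eq_top {N : Module.End K V} {n : ℕ} {v : V}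
    (hfin : Module.finrank K V = n + 1) (hN : (N ^ (n + 1)) v = 0) (hv : (N ^ n) v ≠ 0) :
    Submodule.span K (Set.range fun d : ℕ => (N ^ d) v) = ⊤ :=
  top_le_iff.1 <| (linearIndependent_pow_apply hN hv).span_eq_top_of_card_eq_finrank
    (by simp [hfin]) ▸ Submodule.span_mono (Set.range_subset_iff.2 fun i => ⟨i, rfl⟩)

end CyclicVector

theorem jordanModelMap_bijective {K V : Type*} [Field K] [AddCommGroup V] [Module K V]
    {N : Module.End K V} {p : ℕ} (hp : p.Prime) [CharP K p] {v : V}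
    (hfin : Module.finrank K V = p - 1) (hv0 : (N ^ (p - 1)) v = 0) (hv : (N ^ (p - 2)) v ≠ 0) :
    Function.Bijective (jordanModelMap N p v) := by
  have hp2 := hp.two_le
  have : FiniteDimensional K V := .of_finrank_pos (by omega)
  have h_surj := jordanModelMap_surjective hp hv0 <|
    span_range_pow_apply_eq_top (n := p - 2) (by omega) (by rwa [show p - 2 + 1 = p - 1 by omega])
      hv
  have h_finrank : Module.finrank K (K × (Fin (p - 2) → Fin p → K)) =
      Module.finrank K (V ⊗[K] V) := by
    obtain ⟨m, rfl⟩ : ∃ m, p = m + 2 := ⟨p - 2, by omega⟩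
    simp [Module.finrank_tensorProduct, Module.finrank_pi_fintype, hfin]
    ring
  exact ⟨(LinearMap.injective_iff_surjective_of_finrank_eq_finrank h_finrank).2 h_surj, h_surj⟩

/-- Let `p` be prime, `k` a field of characteristic `p`, `V = k^{p-1}`, and
`N` a nilpotent endomorphism of `V` forming a single Jordan block of size `p-1` (i.e.
`N^{p-1} = 0` and `N^{p-2} ≠ 0`). Let `D = N ⊗ 1 + 1 ⊗ N` on `V ⊗ V`. Then `D^p = 0`, and
there is a basis in which `D` is a nilpotent Jordan matrix with one block of size `1` and
`p-2` blocks of size `p`: there is a `k`-linear equivalence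
`e : V ⊗ V ≃ k × (Fin (p-2) → (Fin p → k))` under which `D` becomes `0` on the `k`-factor and
the shift (size-`p` nilpotent Jordan block) on each of the `p-2` remaining blocks. -/
theorem tensor_square_jordan_decomposition (p : ℕ) (hp : p.Prime)
    (k : Type*) [Field k] [CharP k p]
    (N : Module.End k (Fin (p - 1) → k))
    (hN1 : N ^ (p - 1) = 0) (hN2 : N ^ (p - 2) ≠ 0) :
    ((LinearMap.rTensor (Fin (p - 1) → k) N + LinearMap.lTensor (Fin (p - 1) → k) N :
        Module.End k ((Fin (p - 1) → k) ⊗[k] (Fin (p - 1) → k))) ^ p = 0) ∧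
    ∃ e : ((Fin (p - 1) → k) ⊗[k] (Fin (p - 1) → k)) ≃ₗ[k] (k × (Fin (p - 2) → Fin p → k)),
      ∀ x : (Fin (p - 1) → k) ⊗[k] (Fin (p - 1) → k),
        e ((LinearMap.rTensor (Fin (p - 1) → k) N + LinearMap.lTensor (Fin (p - 1) → k) N) x) =
          ((0 : k), fun b (i : Fin p) =>
            if h : (i : ℕ) + 1 < p then (e x).2 b ⟨(i : ℕ) + 1, h⟩ else 0) := by
  have hNp : N ^ p = 0 := pow_eq_zero_of_le (Nat.sub_le p 1) hN1
  obtain ⟨v, hv⟩ : ∃ v, (N ^ (p - 2)) v ≠ 0 := not_forall.1 fun h => hN2 (LinearMap.ext h)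
  have hv0 : (N ^ (p - 1)) v = 0 := by rw [hN1, LinearMap.zero_apply]
  let e := LinearEquiv.ofBijective _ (jordanModelMap_bijective hp (by simp) hv0 hv)
  have hD : tensorSquareAction N ^ p = 0 := by
    rw [tensorSquareAction_pow_char N hp, hNp]
    simp [tensorSquareAction]
  refine ⟨hD, e.symm, fun x => ?_⟩
  rw [LinearEquiv.symm_apply_eq]
  conv_lhs => rw [← e.apply_symm_apply x]
  exact tensorSquareAction_jordanModelMap hp hv0 _
end
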